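/- arXiv:2207.05564 — 4 statements merged into one kernel-verified Lean document; each statement's English description precedes it below -/
import Mathlib

section
/- The number of planar linear arrangements of a free tree T on n vertices equals n · ∏_{u ∈ V} deg(u)!. -/
open Finset

attribute [local instance] Classical.propDecidable

/-- An arrangement `π` of the vertices of `G` is planar if no two edges cross. -/
def IsPlanarArr {n : ℕ} (G : SimpleGraph (Fin n)) (π : Equiv.Perm (Fin n)) : Prop :=
  ∀ s t u v : Fin n, G.Adj s t → G.Adj u v →
    ¬ (π s < π u ∧ π u < π t ∧ π t < π v)

/-- An arrangement of `G` rooted at `r` is projective if it is planar and no edge covers `r`. -/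
def IsProjectiveArr {n : ℕ} (G : SimpleGraph (Fin n)) (r : Fin n) (π : Equiv.Perm (Fin n)) : Prop :=
  IsPlanarArr G π ∧ ∀ s t : Fin n, G.Adj s t → ¬ (π s < π r ∧ π r < π t)

/-- The set of vertices of the subtree rooted at `u` when `G` is rooted at `r`. -/
noncomputable def subtreeFinset {n : ℕ} (G : SimpleGraph (Fin n)) (r u : Fin n) : Finset (Fin n) :=
  univ.filter (fun v => G.dist r v = G.dist r u + G.dist u v)

/-- Directional size `s_r(u)`: size of the subtree rooted at `u` when `G` is rooted at `r`. -/
noncomputable def subtreeSize {n : ℕ} (G : SimpleGraph (Fin n)) (r u : Fin n) : ℕ :=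
  (subtreeFinset G r u).card

/-- Out-degree (number of children) of `u` in `G` rooted at `r`. -/
noncomputable def outDeg {n : ℕ} (G : SimpleGraph (Fin n)) (r u : Fin n) : ℕ :=
  (univ.filter (fun v => G.Adj u v ∧ G.dist r v = G.dist r u + 1)).card

/-- The sum of edge lengths of `G` in the arrangement `π`. -/
noncomputable def Dsum {n : ℕ} (G : SimpleGraph (Fin n)) (π : Equiv.Perm (Fin n)) : ℤ :=
  ∑ e ∈ G.edgeFinset,
    Sym2.lift ⟨fun u v => |((π u : ℕ) : ℤ) - ((π v : ℕ) : ℤ)|,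
      fun u v => abs_sub_comm _ _⟩ e

/-- The set of planar arrangements of `G`. -/
noncomputable def planarSet {n : ℕ} (G : SimpleGraph (Fin n)) : Finset (Equiv.Perm (Fin n)) :=
  univ.filter (IsPlanarArr G)

/-- The set of projective arrangements of `G` rooted at `r`. -/
noncomputable def projSet {n : ℕ} (G : SimpleGraph (Fin n)) (r : Fin n) :
    Finset (Equiv.Perm (Fin n)) :=
  univ.filter (IsProjectiveArr G r)

/-- The set of projective arrangements of `G` rooted at `r` with `r` in the first position. -/
noncomputable def projSet1 {n : ℕ} (G : SimpleGraph (Fin n)) (r : Fin n) :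
    Finset (Equiv.Perm (Fin n)) :=
  univ.filter (fun π => IsProjectiveArr G r π ∧ (π r : ℕ) = 0)

/-!
Fix the vertex `r` placed first. As nothing can cover the first position, in a planar arrangement
every subtree of the tree rooted at `r` occupies an interval of positions. Deleting a leaf `ℓ ≠ r`
with neighbour `p` leaves a planar arrangement of `T - ℓ` with `r` first; conversely, such an
arrangement extends exactly when `ℓ` is inserted at a gap from which the positions up to `p` form a
union of subtrees of children of `p`. These gaps are the two sides of `p` (only the right one when
`p = r`) and the outer ends of the intervals of the children of `p`: `deg p` of them. By induction
there are `∏ u, (deg u)!` planar arrangements with `r` first, hence `n ∏ u, (deg u)!` in all.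
-/

open SimpleGraph

namespace SimpleGraph

variable {V : Type*} {G : SimpleGraph V}

lemma Walk.dist_add_dist_of_mem_support {u v w : V} {p : G.Walk u v}
    (hp : p.length = G.dist u v) (hw : w ∈ p.support) :
    G.dist u w + G.dist w v = G.dist u v := by
  obtain ⟨q, q', rfl⟩ := Walk.mem_support_iff_exists_append.mp hw
  have := G.dist_le q
  have := G.dist_le q'
  have := q.reachable.dist_triangle_left v
  rw [Walk.length_append] at hp
  omega

lemma Connected.exists_adj_dist_eq_add_one (hG : G.Connected) (r : V) {v : V} (hv : v ≠ r) :
    ∃ w, G.Adj w v ∧ G.dist r v = G.dist r w + 1 := by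
  obtain ⟨p, hp⟩ := hG.exists_walk_length_eq_dist v r
  cases p with
  | nil => exact absurd rfl hv
  | @cons _ w _ hvw q =>
    refine ⟨w, hvw.symm, ?_⟩
    have := G.dist_le q
    have := hvw.reachable.dist_triangle_left r
    rw [Walk.length_cons] at hp
    rw [dist_eq_one_iff_adj.mpr hvw] at this
    rw [dist_comm (u := r), dist_comm (u := r)]
    omega

lemma IsTree.eq_of_adj_of_dist_eq_add_one (hG : G.IsTree) {r v w w' : V}
    (hw : G.Adj w v) (hw' : G.Adj w' v)
    (h : G.dist r v = G.dist r w + 1) (h' : G.dist r v = G.dist r w' + 1) : w = w' := by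
  have geodesic_concat : ∀ x (hx : G.Adj x v), G.dist r v = G.dist r x + 1 →
      ∃ p : G.Walk r x, (p.concat hx).IsPath := by
    intro x hx hdist
    obtain ⟨p, hp, hlen⟩ := hG.connected.exists_path_of_dist r x
    refine ⟨p, hp.concat (fun hv => ?_) hx⟩
    have := p.dist_add_dist_of_mem_support hlen hv
    omega
  obtain ⟨p, hp⟩ := geodesic_concat w hw h
  obtain ⟨p', hp'⟩ := geodesic_concat w' hw' h'
  have := congrArg (fun q : G.Path r v => q.1.penultimate)
    ((hG.isAcyclic.subsingleton_path r v).elim ⟨_, hp⟩ ⟨_, hp'⟩)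
  simpa only [Walk.penultimate_concat] using this

end SimpleGraph

section RootedTree

variable {n : ℕ} {G : SimpleGraph (Fin n)} {r q c u v w : Fin n}

@[simp] lemma mem_subtreeFinset :
    v ∈ subtreeFinset G r u ↔ G.dist r v = G.dist r u + G.dist u v := by
  simp [subtreeFinset]

lemma self_mem_subtreeFinset (G : SimpleGraph (Fin n)) (r u : Fin n) :
    u ∈ subtreeFinset G r u := by
  simp

lemma root_mem_subtreeFinset_iff (hG : G.Connected) : r ∈ subtreeFinset G r u ↔ u = r := by
  rw [mem_subtreeFinset, dist_self]
  constructor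
  · intro h
    exact (hG.dist_eq_zero_iff.mp (by omega)).symm
  · rintro rfl
    simp

lemma mem_subtreeFinset_of_dist_add_dist (hG : G.Connected) (hv : v ∈ subtreeFinset G r u)
    (hw : G.dist u w + G.dist w v = G.dist u v) : w ∈ subtreeFinset G r u := by
  rw [mem_subtreeFinset] at *
  have := hG.dist_triangle (u := r) (v := u) (w := w)
  have := hG.dist_triangle (u := r) (v := w) (w := v)
  omega

lemma mem_subtreeFinset_of_mem_support (hG : G.Connected) (hv : v ∈ subtreeFinset G r u)
    {p : G.Walk u v} (hp : p.length = G.dist u v) (hw : w ∈ p.support) :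
    w ∈ subtreeFinset G r u :=
  mem_subtreeFinset_of_dist_add_dist hG hv (p.dist_add_dist_of_mem_support hp hw)

lemma notMem_subtreeFinset_of_mem_support (hG : G.Connected) (hv : v ∉ subtreeFinset G r u)
    {p : G.Walk r v} (hp : p.length = G.dist r v) (hw : w ∈ p.support) :
    w ∉ subtreeFinset G r u := by
  have := p.dist_add_dist_of_mem_support hp hw
  rw [mem_subtreeFinset] at *
  have := hG.dist_triangle (u := u) (v := w) (w := v)
  have := hG.dist_triangle (u := r) (v := u) (w := v)
  omega

/-- `outDeg G r u` is the cardinality of this set. -/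
noncomputable def childFinset (G : SimpleGraph (Fin n)) (r u : Fin n) : Finset (Fin n) :=
  univ.filter (fun v => G.Adj u v ∧ G.dist r v = G.dist r u + 1)

@[simp] lemma mem_childFinset :
    c ∈ childFinset G r q ↔ G.Adj q c ∧ G.dist r c = G.dist r q + 1 := by
  simp [childFinset]

lemma subtreeFinset_subset_of_mem_childFinset (hG : G.Connected) (hc : c ∈ childFinset G r q) :
    subtreeFinset G r c ⊆ subtreeFinset G r q := by
  intro v hv
  rw [mem_childFinset] at hc
  rw [mem_subtreeFinset] at *
  have := hG.dist_triangle (u := q) (v := c) (w := v)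
  have := hG.dist_triangle (u := r) (v := q) (w := v)
  have := dist_eq_one_iff_adj.mpr hc.1
  omega

lemma notMem_subtreeFinset_of_mem_childFinset (hc : c ∈ childFinset G r q) :
    q ∉ subtreeFinset G r c := by
  rw [mem_childFinset] at hc
  rw [mem_subtreeFinset, dist_eq_one_iff_adj.mpr hc.1.symm]
  omega

lemma exists_mem_childFinset_of_mem_subtreeFinset (hG : G.Connected)
    (hv : v ∈ subtreeFinset G r q) (hvq : v ≠ q) :
    ∃ c ∈ childFinset G r q, v ∈ subtreeFinset G r c := by
  obtain ⟨p, hp⟩ := hG.exists_walk_length_eq_dist q v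
  cases p with
  | nil => exact absurd rfl hvq.symm
  | @cons _ c _ hqc p =>
    rw [Walk.length_cons] at hp
    rw [mem_subtreeFinset] at hv
    have := G.dist_le p
    have := hG.dist_triangle (u := q) (v := c) (w := v)
    have := hG.dist_triangle (u := r) (v := q) (w := c)
    have := hG.dist_triangle (u := r) (v := c) (w := v)
    have := dist_eq_one_iff_adj.mpr hqc
    exact ⟨c, mem_childFinset.mpr ⟨hqc, by omega⟩, mem_subtreeFinset.mpr (by omega)⟩

lemma SimpleGraph.IsTree.eq_of_mem_subtreeFinset_of_mem_childFinset (hT : G.IsTree)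
    {c' : Fin n} (hc : c ∈ childFinset G r q) (hc' : c' ∈ childFinset G r q)
    (hv : v ∈ subtreeFinset G r c) (hv' : v ∈ subtreeFinset G r c') : c = c' := by
  have hvq := subtreeFinset_subset_of_mem_childFinset hT.connected hc hv
  rw [mem_childFinset] at hc hc'
  rw [mem_subtreeFinset] at hv hv' hvq
  have := hT.connected.dist_triangle (u := q) (v := c) (w := v)
  have := hT.connected.dist_triangle (u := q) (v := c') (w := v)
  have := dist_eq_one_iff_adj.mpr hc.1
  have := dist_eq_one_iff_adj.mpr hc'.1
  refine hT.eq_of_adj_of_dist_eq_add_one (r := v) hc.1.symm hc'.1.symm ?_ ?_ <;>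
    simp only [dist_comm (u := v)] <;> omega

lemma SimpleGraph.IsTree.mem_subtreeFinset_of_adj (hT : G.IsTree) (hc : c ∈ childFinset G r q)
    (hu : u ∈ subtreeFinset G r c) (huv : G.Adj u v) (hvq : v ≠ q) :
    v ∈ subtreeFinset G r c := by
  have hG := hT.connected
  rcases hT.dist_eq_dist_add_one_of_adj r huv with hparent | hchild
  · obtain rfl | huc := eq_or_ne u c
    · exact absurd (hT.eq_of_adj_of_dist_eq_add_one huv.symm (mem_childFinset.mp hc).1
        hparent (mem_childFinset.mp hc).2) hvq
    obtain ⟨w, hwu, hw⟩ := hG.exists_adj_dist_eq_add_one c huc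
    have hwc : w ∈ subtreeFinset G r c :=
      mem_subtreeFinset_of_dist_add_dist hG hu (by rw [dist_eq_one_iff_adj.mpr hwu]; omega)
    have := mem_subtreeFinset.mp hwc
    rw [mem_subtreeFinset] at hu
    rwa [hT.eq_of_adj_of_dist_eq_add_one huv.symm hwu hparent (by omega)]
  · rw [mem_subtreeFinset] at hu ⊢
    have := hG.dist_triangle (u := c) (v := u) (w := v)
    have := hG.dist_triangle (u := r) (v := c) (w := v)
    have := dist_eq_one_iff_adj.mpr huv
    omega

lemma SimpleGraph.IsTree.degree_eq_outDeg_add [DecidableRel G.Adj] (hT : G.IsTree) (r q : Fin n) :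
    G.degree q = outDeg G r q + if q = r then 0 else 1 := by
  rw [← card_neighborFinset_eq_degree,
    ← card_filter_add_card_filter_not (p := fun v => G.dist r v = G.dist r q + 1)]
  congr 1
  · rw [outDeg]
    congr 1
    ext v
    simp
  have parent_iff : ∀ v, v ∈ (G.neighborFinset q).filter (¬ G.dist r · = G.dist r q + 1) ↔
      G.Adj v q ∧ G.dist r q = G.dist r v + 1 := by
    intro v
    simp only [mem_filter, mem_neighborFinset]
    constructor
    · rintro ⟨hqv, hd⟩
      exact ⟨hqv.symm, (hT.dist_eq_dist_add_one_of_adj r hqv).resolve_right hd⟩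
    · rintro ⟨hvq, hd⟩
      exact ⟨hvq.symm, by omega⟩
  split_ifs with hqr
  · subst hqr
    simp_rw [card_eq_zero, eq_empty_iff_forall_notMem, parent_iff, SimpleGraph.dist_self]
    omega
  · obtain ⟨w, hwq, hw⟩ := hT.connected.exists_adj_dist_eq_add_one r hqr
    rw [card_eq_one]
    refine ⟨w, eq_singleton_iff_unique_mem.mpr ⟨(parent_iff w).mpr ⟨hwq, hw⟩, fun v hv => ?_⟩⟩
    obtain ⟨hvq, hv⟩ := (parent_iff v).mp hv
    exact hT.eq_of_adj_of_dist_eq_add_one hvq hwq hv hw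

end RootedTree

section ClosedAwayFrom

def ClosedAwayFrom {V : Type*} (G : SimpleGraph V) (q : V) (S : Set V) : Prop :=
  ∀ ⦃a b⦄, G.Adj a b → a ≠ q → b ≠ q → a ∈ S → b ∈ S

lemma ClosedAwayFrom.mem_of_walk {V : Type*} {G : SimpleGraph V} {q : V} {S : Set V}
    (hS : ClosedAwayFrom G q S) {a b : V} (p : G.Walk a b) (hq : q ∉ p.support) (ha : a ∈ S) :
    b ∈ S := by
  induction p with
  | nil => exact ha
  | cons h p ih =>
    rw [Walk.support_cons, List.mem_cons, not_or] at hq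
    exact ih hq.2 (hS h (Ne.symm hq.1) (fun h' => hq.2 (h' ▸ p.start_mem_support)) ha)

variable {n : ℕ} {G : SimpleGraph (Fin n)} {r q c v : Fin n} {S : Set (Fin n)}

lemma ClosedAwayFrom.mem_subtreeFinset (hG : G.Connected) (hS : ClosedAwayFrom G q S)
    (hr : r ∉ S) (hv : v ∈ S) : v ∈ subtreeFinset G r q := by
  obtain ⟨p, hp⟩ := hG.exists_walk_length_eq_dist r v
  have hq : q ∈ p.support := by
    by_contra hq
    exact hr (hS.mem_of_walk p.reverse (by simpa using hq) hv)
  exact _root_.mem_subtreeFinset.mpr (p.dist_add_dist_of_mem_support hp hq).symm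

lemma ClosedAwayFrom.subtreeFinset_subset (hG : G.Connected) (hS : ClosedAwayFrom G q S)
    (hc : c ∈ childFinset G r q) {u : Fin n} (hu : u ∈ subtreeFinset G r c) (huS : u ∈ S) :
    ↑(subtreeFinset G r c) ⊆ S := by
  intro v hv
  obtain ⟨p, hp⟩ := hG.exists_walk_length_eq_dist c u
  obtain ⟨p', hp'⟩ := hG.exists_walk_length_eq_dist c v
  refine hS.mem_of_walk (p.reverse.append p') (fun hq => ?_) huS
  rw [Walk.mem_support_append_iff, Walk.support_reverse, List.mem_reverse] at hq
  refine notMem_subtreeFinset_of_mem_childFinset hc ?_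
  rcases hq with hq | hq
  · exact mem_subtreeFinset_of_mem_support hG hu hp hq
  · exact mem_subtreeFinset_of_mem_support hG hv hp' hq

lemma SimpleGraph.IsTree.closedAwayFrom_of_forall_subtreeFinset (hT : G.IsTree)
    (h : ∀ v ∈ S, ∃ c ∈ childFinset G r q,
      v ∈ subtreeFinset G r c ∧ ↑(subtreeFinset G r c) ⊆ S) :
    ClosedAwayFrom G q S := by
  intro a b hab _ hbq ha
  obtain ⟨c, hc, hac, hcS⟩ := h a ha
  exact hcS (hT.mem_subtreeFinset_of_adj hc hac hab hbq)

end ClosedAwayFrom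

section Planar

variable {n : ℕ} {G : SimpleGraph (Fin n)}

lemma isPlanarArr_iff_comap_symm {π : Equiv.Perm (Fin n)} :
    IsPlanarArr G π ↔ IsPlanarArr (G.comap π.symm) 1 := by
  constructor
  · intro h s t u v hst huv hcross
    exact h _ _ _ _ hst huv (by simpa using hcross)
  · intro h s t u v hst huv hcross
    exact h (π s) (π t) (π u) (π v) (by simpa using hst) (by simpa using huv) hcross

lemma IsPlanarArr.mem_support_of_walk (hpl : IsPlanarArr G 1) {x y t z : Fin n}
    (hxy : G.Adj x y) (hxt : x < t) (hty : t < y) (p : G.Walk t z) (hz : z < x ∨ y < z) :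
    x ∈ p.support ∨ y ∈ p.support := by
  by_contra! h
  obtain ⟨e, he, ⟨hxe, hey⟩, hout⟩ :=
    p.exists_boundary_dart (Set.Ioo x y) ⟨hxt, hty⟩ (by simp only [Set.mem_Ioo]; omega)
  have hsnd := p.dart_snd_mem_support_of_mem_darts he
  have : e.snd ≠ x := fun h' => h.1 (h' ▸ hsnd)
  have : e.snd ≠ y := fun h' => h.2 (h' ▸ hsnd)
  simp only [Set.mem_Ioo, not_and_or, not_lt] at hout
  rcases hout with hout | hout
  · exact hpl e.snd e.fst x y e.adj.symm hxy ⟨show e.snd < x by omega, hxe, hey⟩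
  · exact hpl x y e.fst e.snd hxy e.adj ⟨hxe, hey, show y < e.snd by omega⟩

lemma IsPlanarArr.ordConnected_subtreeFinset (hT : G.IsTree) (hpl : IsPlanarArr G 1) {r : Fin n}
    (hr : ∀ v, r ≤ v) (u : Fin n) : (subtreeFinset G r u : Set (Fin n)).OrdConnected := by
  have hG := hT.connected
  refine ⟨fun a ha b hb t ⟨hat, htb⟩ => ?_⟩
  by_contra ht
  rw [Finset.mem_coe] at ha hb ht
  have hru : r ∉ subtreeFinset G r u := by
    rw [root_mem_subtreeFinset_iff hG]
    rintro rfl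
    exact ht (by simp)
  obtain ⟨pa, hpa⟩ := hG.exists_walk_length_eq_dist u a
  obtain ⟨pb, hpb⟩ := hG.exists_walk_length_eq_dist u b
  obtain ⟨d, hd, hdt, htd⟩ := (pa.reverse.append pb).exists_boundary_dart {x | x ≤ t} hat
    (fun hbt => ht (le_antisymm hbt htb ▸ hb))
  have mem_of_mem_support : ∀ x ∈ (pa.reverse.append pb).support, x ∈ subtreeFinset G r u := by
    intro x hx
    rw [Walk.mem_support_append_iff, Walk.support_reverse, List.mem_reverse] at hx
    exact hx.elim (mem_subtreeFinset_of_mem_support hG ha hpa)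
      (mem_subtreeFinset_of_mem_support hG hb hpb)
  have hd1 := mem_of_mem_support _ (Walk.dart_fst_mem_support_of_mem_darts _ hd)
  have hd2 := mem_of_mem_support _ (Walk.dart_snd_mem_support_of_mem_darts _ hd)
  have hdt' : d.fst < t := lt_of_le_of_ne hdt (fun h => ht (h ▸ hd1))
  have hrd : r < d.fst := lt_of_le_of_ne (hr _) (fun h => hru (h ▸ hd1))
  -- The geodesic from `t` back to the root leaves the region under the edge `d` without meeting
  -- the subtree, which contains both ends of `d`.
  obtain ⟨pt, hpt⟩ := hG.exists_walk_length_eq_dist r t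
  have hout : ∀ x ∈ pt.reverse.support, x ∉ subtreeFinset G r u := by
    intro x hx
    rw [Walk.support_reverse, List.mem_reverse] at hx
    exact notMem_subtreeFinset_of_mem_support hG ht hpt hx
  rcases hpl.mem_support_of_walk d.adj hdt' (not_le.mp htd) pt.reverse (Or.inl hrd) with h | h
  · exact hout _ h hd1
  · exact hout _ h hd2

def Between (x y z : ℕ) : Prop := x < z ∧ z < y ∨ y < z ∧ z < x

lemma IsPlanarArr.between_iff {π : Equiv.Perm (Fin n)} (hpl : IsPlanarArr G π) {s t u v : Fin n}
    (hst : G.Adj s t) (huv : G.Adj u v) (hus : u ≠ s) (hut : u ≠ t) (hvs : v ≠ s) (hvt : v ≠ t) :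
    Between (π s) (π t) (π u) ↔ Between (π s) (π t) (π v) := by
  have no_cross : ∀ a b c d, G.Adj a b → G.Adj c d → (π a : ℕ) < π b → (π a : ℕ) < π c →
      (π c : ℕ) < π b → (π d : ℕ) < π a ∨ (π b : ℕ) < π d → False := by
    intro a b c d hab hcd hab' hac hcb hd
    rcases hd with hd | hd
    · exact hpl d c a b hcd.symm hab (by simp only [Fin.lt_def]; omega)
    · exact hpl a b c d hab hcd (by simp only [Fin.lt_def]; omega)
  have := Fin.val_ne_of_ne (π.injective.ne hus)
  have := Fin.val_ne_of_ne (π.injective.ne hut)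
  have := Fin.val_ne_of_ne (π.injective.ne hvs)
  have := Fin.val_ne_of_ne (π.injective.ne hvt)
  have := Fin.val_ne_of_ne (π.injective.ne hst.ne)
  unfold Between
  by_contra h
  rcases lt_or_gt_of_ne this with hst' | hts'
  · have : (π s : ℕ) < π u ∧ (π u : ℕ) < π t ∧ ((π v : ℕ) < π s ∨ (π t : ℕ) < π v) ∨
        (π s : ℕ) < π v ∧ (π v : ℕ) < π t ∧ ((π u : ℕ) < π s ∨ (π t : ℕ) < π u) := by
      omega
    rcases this with ⟨h1, h2, h3⟩ | ⟨h1, h2, h3⟩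
    exacts [no_cross s t u v hst huv hst' h1 h2 h3, no_cross s t v u hst huv.symm hst' h1 h2 h3]
  · have : (π t : ℕ) < π u ∧ (π u : ℕ) < π s ∧ ((π v : ℕ) < π t ∨ (π s : ℕ) < π v) ∨
        (π t : ℕ) < π v ∧ (π v : ℕ) < π s ∧ ((π u : ℕ) < π t ∨ (π s : ℕ) < π u) := by
      omega
    rcases this with ⟨h1, h2, h3⟩ | ⟨h1, h2, h3⟩
    exacts [no_cross t s u v hst.symm huv hts' h1 h2 h3,
      no_cross t s v u hst.symm huv.symm hts' h1 h2 h3]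

end Planar

section Gaps

/-- Inserting a new point at gap `g` of an arrangement gives it position `g` and shifts the old
positions `≥ g` up by one; `GapEncloses g q a` says that old position `a` then lies strictly between
the new point and old position `q`. -/
def GapEncloses (g q a : ℕ) : Prop := g ≤ a ∧ a < q ∨ q < a ∧ a < g

variable {m : ℕ} {H : SimpleGraph (Fin (m + 1))} {q c : Fin (m + 1)}

/-- Gaps of the identity arrangement of `H` at which a new leaf attached to `q` can be inserted
without crossings, keeping `0` in the first position. -/
def IsValidGap (H : SimpleGraph (Fin (m + 1))) (q : Fin (m + 1)) (g : Fin (m + 2)) : Prop :=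
  0 < g ∧ ClosedAwayFrom H q {a | GapEncloses g q a}

noncomputable def subtreeMin (H : SimpleGraph (Fin (m + 1))) (c : Fin (m + 1)) : Fin (m + 1) :=
  (subtreeFinset H 0 c).min' ⟨c, self_mem_subtreeFinset H 0 c⟩

noncomputable def subtreeMax (H : SimpleGraph (Fin (m + 1))) (c : Fin (m + 1)) : Fin (m + 1) :=
  (subtreeFinset H 0 c).max' ⟨c, self_mem_subtreeFinset H 0 c⟩

lemma subtreeMin_mem : subtreeMin H c ∈ subtreeFinset H 0 c := min'_mem _ _

lemma subtreeMax_mem : subtreeMax H c ∈ subtreeFinset H 0 c := max'_mem _ _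

lemma exists_mem_childFinset_of_gapEncloses (hT : H.IsTree) {g : Fin (m + 2)}
    (hg : IsValidGap H q g) {x : Fin (m + 1)} (hx : GapEncloses g q x) :
    ∃ c ∈ childFinset H 0 q, x ∈ subtreeFinset H 0 c ∧
      ↑(subtreeFinset H 0 c) ⊆ {a : Fin (m + 1) | GapEncloses g q a} := by
  have h0 : (0 : Fin (m + 1)) ∉ {a : Fin (m + 1) | GapEncloses g q a} := by
    have := hg.1
    simp only [GapEncloses, Set.mem_ofPred_eq, Fin.val_zero]
    omega
  have hxq : x ≠ q := by
    rintro rfl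
    simp only [GapEncloses] at hx
    omega
  obtain ⟨c, hc, hxc⟩ := exists_mem_childFinset_of_mem_subtreeFinset hT.connected
    (hg.2.mem_subtreeFinset hT.connected h0 hx) hxq
  exact ⟨c, hc, hxc, hg.2.subtreeFinset_subset hT.connected hc hxc hx⟩

lemma exists_mem_childFinset_of_isValidGap_of_lt (hT : H.IsTree) {g : Fin (m + 2)}
    (hg : IsValidGap H q g) (hgq : (g : ℕ) < q) :
    ∃ c ∈ childFinset H 0 q, c < q ∧ (subtreeMin H c).castSucc = g := by
  obtain ⟨c, hc, hgc, hcS⟩ := exists_mem_childFinset_of_gapEncloses hT hg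
    (x := ⟨g, by omega⟩) (Or.inl ⟨le_rfl, hgq⟩)
  have bounds : ∀ y ∈ subtreeFinset H 0 c, (g : ℕ) ≤ y ∧ (y : ℕ) < q := fun y hy => by
    have := hcS hy
    simp only [GapEncloses, Set.mem_ofPred_eq] at this
    omega
  refine ⟨c, hc, (bounds c (self_mem_subtreeFinset H 0 c)).2, Fin.ext ?_⟩
  have hmin : (subtreeMin H c : ℕ) ≤ g := min'_le _ _ hgc
  rw [Fin.val_castSucc]
  exact le_antisymm hmin (bounds _ subtreeMin_mem).1

lemma exists_mem_childFinset_of_isValidGap_of_gt (hT : H.IsTree) {g : Fin (m + 2)}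
    (hg : IsValidGap H q g) (hqg : (q : ℕ) + 1 < g) :
    ∃ c ∈ childFinset H 0 q, q < c ∧ (subtreeMax H c).succ = g := by
  obtain ⟨c, hc, hgc, hcS⟩ := exists_mem_childFinset_of_gapEncloses hT hg
    (x := ⟨g - 1, by omega⟩) (Or.inr ⟨show (q : ℕ) < g - 1 by omega, show g - 1 < (g : ℕ) by omega⟩)
  have bounds : ∀ y ∈ subtreeFinset H 0 c, (q : ℕ) < y ∧ (y : ℕ) < g := fun y hy => by
    have := hcS hy
    simp only [GapEncloses, Set.mem_ofPred_eq] at this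
    omega
  refine ⟨c, hc, (bounds c (self_mem_subtreeFinset H 0 c)).1, Fin.ext ?_⟩
  have hmax : g - 1 ≤ (subtreeMax H c : ℕ) := le_max' _ _ hgc
  have := (bounds _ subtreeMax_mem).2
  rw [Fin.val_succ]
  omega

lemma lt_iff_lt_of_mem_subtreeFinset (hT : H.IsTree) (hpl : IsPlanarArr H 1)
    (hc : c ∈ childFinset H 0 q) {x y : Fin (m + 1)} (hx : x ∈ subtreeFinset H 0 c)
    (hy : y ∈ subtreeFinset H 0 c) : x < q ↔ y < q := by
  have hconn := hpl.ordConnected_subtreeFinset hT Fin.zero_le c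
  have hq := notMem_subtreeFinset_of_mem_childFinset hc
  constructor
  · intro hxq
    by_contra hyq
    exact hq (hconn.out hx hy ⟨hxq.le, not_lt.mp hyq⟩)
  · intro hyq
    by_contra hxq
    exact hq (hconn.out hy hx ⟨hyq.le, not_lt.mp hxq⟩)

lemma ne_zero_of_mem_childFinset (hc : c ∈ childFinset H 0 q) : c ≠ 0 := by
  rintro rfl
  have := (mem_childFinset.mp hc).2
  rw [SimpleGraph.dist_self] at this
  omega

lemma isValidGap_castSucc_subtreeMin (hT : H.IsTree) (hpl : IsPlanarArr H 1)
    (hc : c ∈ childFinset H 0 q) (hcq : c < q) : IsValidGap H q (subtreeMin H c).castSucc := by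
  have hG := hT.connected
  have hμ : subtreeMin H c ∈ subtreeFinset H 0 c := subtreeMin_mem
  have hμc : subtreeMin H c ≤ c := min'_le _ _ (self_mem_subtreeFinset H 0 c)
  refine ⟨?_, hT.closedAwayFrom_of_forall_subtreeFinset (r := 0) fun x hx => ?_⟩
  · have : subtreeMin H c ≠ 0 := fun h =>
      ne_zero_of_mem_childFinset hc ((root_mem_subtreeFinset_iff hG).mp (h ▸ hμ))
    rw [Fin.lt_def, Fin.val_castSucc]
    exact Nat.pos_of_ne_zero (Fin.val_ne_of_ne this)
  simp only [GapEncloses, Set.mem_ofPred_eq, Fin.val_castSucc] at hx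
  have hxq : subtreeMin H c ≤ x ∧ x < q := by
    simp only [Fin.le_def, Fin.lt_def] at hμc hcq ⊢
    omega
  have hxD : x ∈ subtreeFinset H 0 q :=
    (hpl.ordConnected_subtreeFinset hT Fin.zero_le q).out
      (subtreeFinset_subset_of_mem_childFinset hG hc hμ) (self_mem_subtreeFinset H 0 q)
      ⟨hxq.1, hxq.2.le⟩
  obtain ⟨c', hc', hxc'⟩ := exists_mem_childFinset_of_mem_subtreeFinset hG hxD hxq.2.ne
  refine ⟨c', hc', hxc', fun y hy => ?_⟩
  have hyq := (lt_iff_lt_of_mem_subtreeFinset hT hpl hc' hxc' hy).mp hxq.2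
  have hμy : subtreeMin H c ≤ y := by
    by_contra! hyμ
    have hμc' : subtreeMin H c ∈ subtreeFinset H 0 c' :=
      (hpl.ordConnected_subtreeFinset hT Fin.zero_le c').out hy hxc' ⟨hyμ.le, hxq.1⟩
    obtain rfl := hT.eq_of_mem_subtreeFinset_of_mem_childFinset hc hc' hμ hμc'
    exact hyμ.not_ge (min'_le _ _ hy)
  simp only [GapEncloses, Set.mem_ofPred_eq, Fin.val_castSucc]
  simp only [Fin.le_def, Fin.lt_def] at hμy hyq
  omega

lemma isValidGap_succ_subtreeMax (hT : H.IsTree) (hpl : IsPlanarArr H 1)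
    (hc : c ∈ childFinset H 0 q) (hqc : q < c) : IsValidGap H q (subtreeMax H c).succ := by
  have hG := hT.connected
  have hν : subtreeMax H c ∈ subtreeFinset H 0 c := subtreeMax_mem
  have hcν : c ≤ subtreeMax H c := le_max' _ _ (self_mem_subtreeFinset H 0 c)
  refine ⟨Fin.succ_pos _, hT.closedAwayFrom_of_forall_subtreeFinset (r := 0) fun x hx => ?_⟩
  simp only [GapEncloses, Set.mem_ofPred_eq, Fin.val_succ] at hx
  have hxq : q < x ∧ x ≤ subtreeMax H c := by
    simp only [Fin.le_def, Fin.lt_def] at hcν hqc ⊢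
    omega
  have hxD : x ∈ subtreeFinset H 0 q :=
    (hpl.ordConnected_subtreeFinset hT Fin.zero_le q).out (self_mem_subtreeFinset H 0 q)
      (subtreeFinset_subset_of_mem_childFinset hG hc hν) ⟨hxq.1.le, hxq.2⟩
  obtain ⟨c', hc', hxc'⟩ := exists_mem_childFinset_of_mem_subtreeFinset hG hxD hxq.1.ne'
  refine ⟨c', hc', hxc', fun y hy => ?_⟩
  have hqy : q < y := by
    have := (lt_iff_lt_of_mem_subtreeFinset hT hpl hc' hxc' hy).not.mp hxq.1.not_gt
    have hyq : y ≠ q := fun h => notMem_subtreeFinset_of_mem_childFinset hc' (h ▸ hy)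
    exact lt_of_le_of_ne (not_lt.mp this) hyq.symm
  have hyν : y ≤ subtreeMax H c := by
    by_contra! hνy
    have hνc' : subtreeMax H c ∈ subtreeFinset H 0 c' :=
      (hpl.ordConnected_subtreeFinset hT Fin.zero_le c').out hxc' hy ⟨hxq.2, hνy.le⟩
    obtain rfl := hT.eq_of_mem_subtreeFinset_of_mem_childFinset hc hc' hν hνc'
    exact hνy.not_ge (le_max' _ _ hy)
  simp only [GapEncloses, Set.mem_ofPred_eq, Fin.val_succ]
  simp only [Fin.le_def, Fin.lt_def] at hyν hqy
  omega

lemma isValidGap_castSucc_self (hq : q ≠ 0) : IsValidGap H q q.castSucc := by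
  refine ⟨Fin.castSucc_pos_iff.mpr (Fin.pos_iff_ne_zero.mpr hq), fun a b _ _ _ ha => ?_⟩
  simp only [GapEncloses, Set.mem_ofPred_eq, Fin.val_castSucc] at ha
  omega

lemma isValidGap_succ_self : IsValidGap H q q.succ := by
  refine ⟨Fin.succ_pos _, fun a b _ _ _ ha => ?_⟩
  simp only [GapEncloses, Set.mem_ofPred_eq, Fin.val_succ] at ha
  omega

lemma card_isValidGap_lt (hT : H.IsTree) (hpl : IsPlanarArr H 1) :
    #{g : Fin (m + 2) | IsValidGap H q g ∧ (g : ℕ) < q} = #{c ∈ childFinset H 0 q | c < q} := by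
  have himage : ({g | IsValidGap H q g ∧ (g : ℕ) < q} : Finset (Fin (m + 2))) =
      {c ∈ childFinset H 0 q | c < q}.image fun c => (subtreeMin H c).castSucc := by
    ext g
    simp only [mem_filter, mem_univ, true_and, mem_image]
    constructor
    · rintro ⟨hg, hgq⟩
      obtain ⟨c, hc, hcq, rfl⟩ := exists_mem_childFinset_of_isValidGap_of_lt hT hg hgq
      exact ⟨c, ⟨hc, hcq⟩, rfl⟩
    · rintro ⟨c, ⟨hc, hcq⟩, rfl⟩
      have := min'_le _ _ (self_mem_subtreeFinset H 0 c)
      refine ⟨isValidGap_castSucc_subtreeMin hT hpl hc hcq, ?_⟩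
      simp only [subtreeMin, Fin.val_castSucc, Fin.le_def, Fin.lt_def] at this hcq ⊢
      omega
  rw [himage, card_image_of_injOn]
  intro c hc c' hc' h
  simp only [coe_filter, Set.mem_ofPred_eq] at hc hc'
  refine hT.eq_of_mem_subtreeFinset_of_mem_childFinset hc.1 hc'.1 subtreeMin_mem ?_
  rw [Fin.castSucc_inj.mp h]
  exact subtreeMin_mem

lemma card_isValidGap_gt (hT : H.IsTree) (hpl : IsPlanarArr H 1) :
    #{g : Fin (m + 2) | IsValidGap H q g ∧ (q : ℕ) + 1 < g} = #{c ∈ childFinset H 0 q | q < c} := by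
  have himage : ({g | IsValidGap H q g ∧ (q : ℕ) + 1 < g} : Finset (Fin (m + 2))) =
      {c ∈ childFinset H 0 q | q < c}.image fun c => (subtreeMax H c).succ := by
    ext g
    simp only [mem_filter, mem_univ, true_and, mem_image]
    constructor
    · rintro ⟨hg, hqg⟩
      obtain ⟨c, hc, hqc, rfl⟩ := exists_mem_childFinset_of_isValidGap_of_gt hT hg hqg
      exact ⟨c, ⟨hc, hqc⟩, rfl⟩
    · rintro ⟨c, ⟨hc, hqc⟩, rfl⟩
      have := le_max' _ _ (self_mem_subtreeFinset H 0 c)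
      refine ⟨isValidGap_succ_subtreeMax hT hpl hc hqc, ?_⟩
      simp only [subtreeMax, Fin.val_succ, Fin.le_def, Fin.lt_def] at this hqc ⊢
      omega
  rw [himage, card_image_of_injOn]
  intro c hc c' hc' h
  simp only [coe_filter, Set.mem_ofPred_eq] at hc hc'
  refine hT.eq_of_mem_subtreeFinset_of_mem_childFinset hc.1 hc'.1 subtreeMax_mem ?_
  rw [Fin.succ_inj.mp h]
  exact subtreeMax_mem

lemma card_isValidGap_of_le_of_le :
    #{g : Fin (m + 2) | IsValidGap H q g ∧ (q : ℕ) ≤ g ∧ (g : ℕ) ≤ q + 1} =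
      if q = 0 then 1 else 2 := by
  have mem_iff : ∀ g : Fin (m + 2), (IsValidGap H q g ∧ (q : ℕ) ≤ g ∧ (g : ℕ) ≤ q + 1) ↔
      g = q.succ ∨ q ≠ 0 ∧ g = q.castSucc := by
    intro g
    constructor
    · rintro ⟨⟨hg0, -⟩, h1, h2⟩
      rcases (show (g : ℕ) = q + 1 ∨ (g : ℕ) = q by omega) with h | h
      · exact Or.inl (Fin.ext (by simp [h]))
      · refine Or.inr ⟨fun hq => ?_, Fin.ext (by simp [h])⟩
        simp only [Fin.lt_def, Fin.val_zero, h, hq] at hg0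
        omega
    · rintro (rfl | ⟨hq, rfl⟩)
      · exact ⟨isValidGap_succ_self, by simp⟩
      · exact ⟨isValidGap_castSucc_self hq, by simp⟩
  split_ifs with hq
  · rw [card_eq_one]
    refine ⟨q.succ, ?_⟩
    ext g
    rw [mem_filter, mem_iff]
    simp [hq]
  · rw [card_eq_two]
    refine ⟨q.succ, q.castSucc, Fin.castSucc_lt_succ.ne', ?_⟩
    ext g
    rw [mem_filter, mem_iff]
    simp [hq]

/-- The valid gaps are the left ends of the subtrees of the children of `q` lying to its left, the
right ends of those lying to its right, and the two sides of `q` itself (only the right one if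
`q = 0`). -/
theorem card_isValidGap [DecidableRel H.Adj] (hT : H.IsTree) (hpl : IsPlanarArr H 1)
    (q : Fin (m + 1)) : #{g | IsValidGap H q g} = H.degree q + 1 := by
  have hsplit : ({g | IsValidGap H q g} : Finset (Fin (m + 2))) =
      ({g | IsValidGap H q g ∧ (g : ℕ) < q} : Finset (Fin (m + 2))) ∪
        ({g | IsValidGap H q g ∧ (q : ℕ) ≤ g ∧ (g : ℕ) ≤ q + 1} : Finset (Fin (m + 2))) ∪
        ({g | IsValidGap H q g ∧ (q : ℕ) + 1 < g} : Finset (Fin (m + 2))) := by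
    ext g
    simp only [mem_union, mem_filter, mem_univ, true_and, ← and_or_left]
    exact ⟨fun hg => ⟨hg, by omega⟩, And.left⟩
  have children : #{c ∈ childFinset H 0 q | c < q} + #{c ∈ childFinset H 0 q | q < c} =
      outDeg H 0 q := by
    rw [show outDeg H 0 q = #(childFinset H 0 q) from rfl,
      ← card_filter_add_card_filter_not (s := childFinset H 0 q) (p := (· < q))]
    congr 2
    refine filter_congr fun c hc => ?_
    rw [not_lt, le_iff_lt_or_eq]
    exact ⟨Or.inl, fun h => h.resolve_right (mem_childFinset.mp hc).1.ne⟩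
  rw [hsplit, card_union_of_disjoint, card_union_of_disjoint, card_isValidGap_lt hT hpl,
    card_isValidGap_of_le_of_le, card_isValidGap_gt hT hpl, hT.degree_eq_outDeg_add 0 q,
    ← children]
  · split_ifs <;> omega
  all_goals
    refine disjoint_left.mpr fun g h1 h2 => ?_
    simp only [mem_union, mem_filter, mem_univ, true_and, ← and_or_left] at h1 h2
    have := h1.2
    have := h2.2
    omega

end Gaps

section Insertion

variable {k : ℕ}

def insertAt (ℓ g : Fin (k + 1)) (σ : Equiv.Perm (Fin k)) : Equiv.Perm (Fin (k + 1)) :=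
  (finSuccEquiv' ℓ).trans ((Equiv.optionCongr σ).trans (finSuccEquiv' g).symm)

@[simp] lemma insertAt_apply_self (ℓ g : Fin (k + 1)) (σ : Equiv.Perm (Fin k)) :
    insertAt ℓ g σ ℓ = g := by
  simp [insertAt]

@[simp] lemma insertAt_apply_succAbove (ℓ g : Fin (k + 1)) (σ : Equiv.Perm (Fin k)) (a : Fin k) :
    insertAt ℓ g σ (ℓ.succAbove a) = g.succAbove (σ a) := by
  simp [insertAt]

def removeAt (ℓ : Fin (k + 1)) (τ : Equiv.Perm (Fin (k + 1))) : Equiv.Perm (Fin k) :=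
  (finSuccAboveEquiv ℓ).trans
    ((τ.subtypeEquiv (q := (· ≠ τ ℓ)) fun _ => τ.injective.ne_iff.symm).trans
      (finSuccAboveEquiv (τ ℓ)).symm)

lemma succAbove_removeAt_apply (ℓ : Fin (k + 1)) (τ : Equiv.Perm (Fin (k + 1))) (a : Fin k) :
    (τ ℓ).succAbove (removeAt ℓ τ a) = τ (ℓ.succAbove a) := by
  have := (finSuccAboveEquiv (τ ℓ)).apply_symm_apply
    ⟨τ (ℓ.succAbove a), τ.injective.ne (Fin.succAbove_ne ℓ a)⟩
  rw [finSuccAboveEquiv_apply, Subtype.ext_iff] at this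
  exact this

def insertAtEquiv (ℓ : Fin (k + 1)) :
    Fin (k + 1) × Equiv.Perm (Fin k) ≃ Equiv.Perm (Fin (k + 1)) where
  toFun x := insertAt ℓ x.1 x.2
  invFun τ := (τ ℓ, removeAt ℓ τ)
  left_inv := by
    rintro ⟨g, σ⟩
    refine Prod.ext (insertAt_apply_self ℓ g σ) (Equiv.ext fun a => ?_)
    have := succAbove_removeAt_apply ℓ (insertAt ℓ g σ) a
    rw [insertAt_apply_succAbove, insertAt_apply_self] at this
    exact Fin.succAbove_right_injective this
  right_inv := by
    intro τ
    ext x : 1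
    obtain rfl | hx := eq_or_ne x ℓ
    · exact insertAt_apply_self _ _ _
    · obtain ⟨a, rfl⟩ := Fin.exists_succAbove_eq hx
      rw [insertAt_apply_succAbove, succAbove_removeAt_apply]

lemma Fin.val_succAbove_cases {k : ℕ} (g : Fin (k + 1)) (x : Fin k) :
    (g.succAbove x : ℕ) = x ∧ (x : ℕ) < g ∨ (g.succAbove x : ℕ) = x + 1 ∧ (g : ℕ) ≤ x := by
  rcases lt_or_ge x.castSucc g with h | h
  · exact Or.inl ⟨by rw [Fin.succAbove_of_castSucc_lt _ _ h, Fin.val_castSucc], h⟩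
  · exact Or.inr ⟨by rw [Fin.succAbove_of_le_castSucc _ _ h, Fin.val_succ], h⟩

variable {G : SimpleGraph (Fin (k + 1))} {ℓ : Fin (k + 1)} {p : Fin k}

lemma adj_cases_of_forall_adj_iff (hℓ : ∀ y, G.Adj ℓ y ↔ y = ℓ.succAbove p) {s t : Fin (k + 1)}
    (h : G.Adj s t) :
    (∃ a b, (G.comap ℓ.succAbove).Adj a b ∧ s = ℓ.succAbove a ∧ t = ℓ.succAbove b) ∨
      s = ℓ ∧ t = ℓ.succAbove p ∨ s = ℓ.succAbove p ∧ t = ℓ := by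
  obtain rfl | hs := eq_or_ne s ℓ
  · exact Or.inr (Or.inl ⟨rfl, (hℓ t).mp h⟩)
  obtain rfl | ht := eq_or_ne t ℓ
  · exact Or.inr (Or.inr ⟨(hℓ s).mp h.symm, rfl⟩)
  obtain ⟨a, rfl⟩ := Fin.exists_succAbove_eq hs
  obtain ⟨b, rfl⟩ := Fin.exists_succAbove_eq ht
  exact Or.inl ⟨a, b, h, rfl, rfl⟩

lemma val_insertAt_succAbove_cases (ℓ g : Fin (k + 1)) (σ : Equiv.Perm (Fin k)) (a : Fin k) :
    (insertAt ℓ g σ (ℓ.succAbove a) : ℕ) = σ a ∧ (σ a : ℕ) < g ∨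
      (insertAt ℓ g σ (ℓ.succAbove a) : ℕ) = σ a + 1 ∧ (g : ℕ) ≤ σ a := by
  rw [insertAt_apply_succAbove]
  exact Fin.val_succAbove_cases g (σ a)

lemma IsPlanarArr.of_insertAt (hℓ : ∀ y, G.Adj ℓ y ↔ y = ℓ.succAbove p) {g : Fin (k + 1)}
    {σ : Equiv.Perm (Fin k)} (hpl : IsPlanarArr G (insertAt ℓ g σ)) :
    IsPlanarArr (G.comap ℓ.succAbove) σ ∧
      ClosedAwayFrom (G.comap ℓ.succAbove) p {a | GapEncloses g (σ p) (σ a)} := by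
  refine ⟨fun a b c d hab hcd hcross => hpl _ _ _ _ hab hcd ?_, fun a b hab hap hbp ha => ?_⟩
  · simpa only [insertAt_apply_succAbove, Fin.succAbove_lt_succAbove_iff] using hcross
  have := hpl.between_iff ((hℓ _).mpr rfl) hab (Fin.succAbove_ne ℓ a)
    (Fin.succAbove_right_injective.ne hap) (Fin.succAbove_ne ℓ b)
    (Fin.succAbove_right_injective.ne hbp)
  simp only [Between, GapEncloses, Set.mem_ofPred_eq, insertAt_apply_self] at this ha ⊢
  have := val_insertAt_succAbove_cases ℓ g σ a
  have := val_insertAt_succAbove_cases ℓ g σ b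
  have := val_insertAt_succAbove_cases ℓ g σ p
  have := Fin.val_ne_of_ne (σ.injective.ne hap)
  have := Fin.val_ne_of_ne (σ.injective.ne hbp)
  omega

lemma isPlanarArr_insertAt (hℓ : ∀ y, G.Adj ℓ y ↔ y = ℓ.succAbove p) {g : Fin (k + 1)}
    {σ : Equiv.Perm (Fin k)} (hσ : IsPlanarArr (G.comap ℓ.succAbove) σ)
    (hS : ClosedAwayFrom (G.comap ℓ.succAbove) p {a | GapEncloses g (σ p) (σ a)}) :
    IsPlanarArr G (insertAt ℓ g σ) := by
  intro s t u v hst huv hcross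
  have closed_iff : ∀ a b, (G.comap ℓ.succAbove).Adj a b → (σ a : ℕ) = σ p ∨ (σ b : ℕ) = σ p ∨
      (GapEncloses g (σ p) (σ a) ↔ GapEncloses g (σ p) (σ b)) := by
    intro a b hab
    by_cases hap : a = p; · exact Or.inl (by rw [hap])
    by_cases hbp : b = p; · exact Or.inr (Or.inl (by rw [hbp]))
    exact Or.inr (Or.inr ⟨fun h => hS hab hap hbp h, fun h => hS hab.symm hbp hap h⟩)
  unfold GapEncloses at closed_iff
  have hval := val_insertAt_succAbove_cases ℓ g σ
  -- Each of the two edges is an edge of `G - ℓ` or the edge `ℓp`, in either orientation.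
  rcases adj_cases_of_forall_adj_iff hℓ hst with
      ⟨a, b, hab, rfl, rfl⟩ | ⟨rfl, rfl⟩ | ⟨rfl, rfl⟩ <;>
    rcases adj_cases_of_forall_adj_iff hℓ huv with
      ⟨c, d, hcd, rfl, rfl⟩ | ⟨rfl, rfl⟩ | ⟨rfl, rfl⟩
  · exact hσ a b c d hab hcd (by simpa only [insertAt_apply_succAbove,
      Fin.succAbove_lt_succAbove_iff] using hcross)
  all_goals simp only [Fin.lt_def, insertAt_apply_self] at hcross
  · have := closed_iff a b hab; have := hval a; have := hval b; have := hval p; omega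
  · have := closed_iff a b hab; have := hval a; have := hval b; have := hval p; omega
  · have := closed_iff c d hcd; have := hval c; have := hval d; have := hval p; omega
  · omega
  · omega
  · have := closed_iff c d hcd; have := hval c; have := hval d; have := hval p; omega
  · omega
  · omega

theorem isPlanarArr_insertAt_iff (hℓ : ∀ y, G.Adj ℓ y ↔ y = ℓ.succAbove p) (g : Fin (k + 1))
    (σ : Equiv.Perm (Fin k)) :
    IsPlanarArr G (insertAt ℓ g σ) ↔ IsPlanarArr (G.comap ℓ.succAbove) σ ∧
      ClosedAwayFrom (G.comap ℓ.succAbove) p {a | GapEncloses g (σ p) (σ a)} :=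
  ⟨IsPlanarArr.of_insertAt hℓ, fun h => isPlanarArr_insertAt hℓ h.1 h.2⟩

end Insertion

section DeleteLeaf

variable {k : ℕ} {G : SimpleGraph (Fin (k + 1))} {ℓ : Fin (k + 1)} {p : Fin k}

lemma degree_succAbove (G : SimpleGraph (Fin (k + 1))) [DecidableRel G.Adj] (ℓ : Fin (k + 1))
    (a : Fin k) :
    G.degree (ℓ.succAbove a) =
      (G.comap ℓ.succAbove).degree a + if G.Adj ℓ (ℓ.succAbove a) then 1 else 0 := by
  have hnbr : (G.neighborFinset (ℓ.succAbove a)).erase ℓ =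
      ((G.comap ℓ.succAbove).neighborFinset a).map (Fin.succAboveEmb ℓ) := by
    ext y
    simp only [mem_erase, mem_neighborFinset, mem_map, Fin.coe_succAboveEmb, comap_adj]
    constructor
    · rintro ⟨hyℓ, hy⟩
      obtain ⟨b, rfl⟩ := Fin.exists_succAbove_eq hyℓ
      exact ⟨b, hy, rfl⟩
    · rintro ⟨b, hb, rfl⟩
      exact ⟨Fin.succAbove_ne ℓ b, hb⟩
  rw [← card_neighborFinset_eq_degree, ← card_neighborFinset_eq_degree,
    ← card_map (Fin.succAboveEmb ℓ), ← hnbr]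
  split_ifs with h
  · exact (card_erase_add_one ((mem_neighborFinset _ _ _).mpr h.symm)).symm
  · rw [erase_eq_of_notMem (fun h' => h ((mem_neighborFinset _ _ _).mp h').symm), add_zero]

lemma degree_eq_one_of_forall_adj_iff [DecidableRel G.Adj]
    (hℓ : ∀ y, G.Adj ℓ y ↔ y = ℓ.succAbove p) : G.degree ℓ = 1 :=
  degree_eq_one_iff_existsUnique_adj.mpr ⟨_, (hℓ _).mpr rfl, fun y => (hℓ y).mp⟩

lemma SimpleGraph.IsTree.comap_succAbove [DecidableRel G.Adj] (hT : G.IsTree)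
    (hℓ : G.degree ℓ = 1) : (G.comap ℓ.succAbove).IsTree :=
  (Iso.comap (finSuccAboveEquiv ℓ) (G.induce {ℓ}ᶜ)).isTree_iff.mpr
    ⟨hT.connected.induce_compl_singleton_of_degree_eq_one hℓ, hT.isAcyclic.induce _⟩

lemma prod_factorial_degree_of_forall_adj_iff [DecidableRel G.Adj]
    (hℓ : ∀ y, G.Adj ℓ y ↔ y = ℓ.succAbove p) :
    ∏ u, (G.degree u).factorial =
      G.degree (ℓ.succAbove p) * ∏ a, ((G.comap ℓ.succAbove).degree a).factorial := by
  have hdeg : ∀ a, G.degree (ℓ.succAbove a) =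
      (G.comap ℓ.succAbove).degree a + if a = p then 1 else 0 := fun a => by
    simp only [degree_succAbove, hℓ, Fin.succAbove_right_injective.eq_iff]
  rw [Fin.prod_univ_succAbove _ ℓ, degree_eq_one_of_forall_adj_iff hℓ, Nat.factorial_one, one_mul,
    Fintype.prod_eq_mul_prod_compl p, Fintype.prod_eq_mul_prod_compl p, hdeg p, if_pos rfl,
    Nat.factorial_succ, mul_assoc]
  congr 2
  refine prod_congr rfl fun a ha => ?_
  rw [hdeg a, if_neg (by simpa using ha), add_zero]

end DeleteLeaf

/-- Relabelling every vertex by its position turns `σ` into the identity arrangement. -/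
lemma card_gaps_of_isPlanarArr {m : ℕ} {H : SimpleGraph (Fin (m + 1))} [DecidableRel H.Adj]
    (hT : H.IsTree) {σ : Equiv.Perm (Fin (m + 1))} (hσ : IsPlanarArr H σ) (p : Fin (m + 1)) :
    #{g : Fin (m + 2) | 0 < g ∧ ClosedAwayFrom H p {a | GapEncloses g (σ p) (σ a)}} =
      H.degree p + 1 := by
  have e : H.comap σ.symm ≃g H := Iso.comap σ.symm H
  have closed_iff : ∀ g : Fin (m + 2), ClosedAwayFrom H p {a | GapEncloses g (σ p) (σ a)} ↔
      ClosedAwayFrom (H.comap σ.symm) (σ p) {a | GapEncloses g (σ p) a} := by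
    intro g
    constructor
    · intro h a b hab ha hb has
      simpa using h (a := σ.symm a) (b := σ.symm b) hab
        (fun h' => ha (by rw [← h', Equiv.apply_symm_apply]))
        (fun h' => hb (by rw [← h', Equiv.apply_symm_apply])) (by simpa using has)
    · intro h a b hab ha hb has
      exact h (a := σ a) (b := σ b) (by simpa using hab) (σ.injective.ne ha) (σ.injective.ne hb) has
  have hdeg : (H.comap σ.symm).degree (σ p) = H.degree p := by
    have := (Iso.comap σ.symm H).degree_eq (σ p)
    rw [Iso.comap_apply, Equiv.symm_apply_apply] at this
    exact this.symm
  have := card_isValidGap (e.isTree_iff.mpr hT) (isPlanarArr_iff_comap_symm.mp hσ) (σ p)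
  have hset : #{g : Fin (m + 2) | 0 < g ∧ ClosedAwayFrom H p {a | GapEncloses g (σ p) (σ a)}} =
      #{g | IsValidGap (H.comap σ.symm) (σ p) g} := by
    congr 1
    ext g
    rw [mem_filter, mem_filter, IsValidGap, closed_iff]
  rw [hset, this, hdeg]

lemma insertAt_apply_succAbove_eq_zero_iff {k : ℕ} (ℓ g : Fin (k + 2))
    (σ : Equiv.Perm (Fin (k + 1))) (r : Fin (k + 1)) :
    insertAt ℓ g σ (ℓ.succAbove r) = 0 ↔ σ r = 0 ∧ 0 < g := by
  rw [insertAt_apply_succAbove, Fin.ext_iff, Fin.ext_iff, Fin.lt_def]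
  have := Fin.val_succAbove_cases g (σ r)
  simp only [Fin.val_zero]
  omega

lemma card_filter_insertAt {k : ℕ} {G : SimpleGraph (Fin (k + 2))} [DecidableRel G.Adj]
    (hT : G.IsTree) {ℓ : Fin (k + 2)} {p : Fin (k + 1)} (hℓ : ∀ y, G.Adj ℓ y ↔ y = ℓ.succAbove p)
    (r : Fin (k + 1)) (σ : Equiv.Perm (Fin (k + 1))) :
    #{g | IsPlanarArr G (insertAt ℓ g σ) ∧ insertAt ℓ g σ (ℓ.succAbove r) = 0} =
      if IsPlanarArr (G.comap ℓ.succAbove) σ ∧ σ r = 0 then G.degree (ℓ.succAbove p) else 0 := by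
  simp only [isPlanarArr_insertAt_iff hℓ, insertAt_apply_succAbove_eq_zero_iff]
  split_ifs with hσ
  · rw [degree_succAbove, if_pos ((hℓ _).mpr rfl), ← card_gaps_of_isPlanarArr
      (hT.comap_succAbove (degree_eq_one_of_forall_adj_iff hℓ)) hσ.1 p]
    congr 1
    exact filter_congr fun g _ => by tauto
  · rw [card_eq_zero, filter_eq_empty_iff]
    exact fun g _ hg => hσ ⟨hg.1.1, hg.2.1⟩

theorem card_filter_isPlanarArr_apply_eq_zero : ∀ {k : ℕ} (G : SimpleGraph (Fin (k + 1)))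
    [DecidableRel G.Adj], G.IsTree →
      ∀ r, #{π | IsPlanarArr G π ∧ π r = 0} = ∏ u, (G.degree u).factorial
  | 0, G, _, _, r => by
    simp [IsPlanarArr, Subsingleton.elim _ (0 : Fin 1)]
  | k + 1, G, _, hT, r => by
    obtain ⟨ℓ, hℓr, hℓ1⟩ : ∃ ℓ, ℓ ≠ r ∧ G.degree ℓ = 1 := by
      obtain ⟨u, v, huv, hu, hv⟩ := hT.exists_ne_and_degree_eq_one
      obtain rfl | hur := eq_or_ne u r
      exacts [⟨v, huv.symm, hv⟩, ⟨u, hur, hu⟩]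
    obtain ⟨w, hℓw, hw⟩ := degree_eq_one_iff_existsUnique_adj.mp hℓ1
    obtain ⟨p, rfl⟩ := Fin.exists_succAbove_eq (G.ne_of_adj hℓw).symm
    have hℓ : ∀ y, G.Adj ℓ y ↔ y = ℓ.succAbove p := fun y => ⟨hw y, fun h => h ▸ hℓw⟩
    obtain ⟨r, rfl⟩ := Fin.exists_succAbove_eq hℓr.symm
    set P : Equiv.Perm (Fin (k + 2)) → Prop := fun τ => IsPlanarArr G τ ∧ τ (ℓ.succAbove r) = 0
    calc #{τ | P τ}
        = #{x : Fin (k + 2) × Equiv.Perm (Fin (k + 1)) | P (insertAt ℓ x.1 x.2)} :=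
          (card_equiv (insertAtEquiv ℓ) fun x => by simp [insertAtEquiv]).symm
      _ = ∑ σ, #{g | P (insertAt ℓ g σ)} := by
          simp only [card_filter, Fintype.sum_prod_type_right]
      _ = ∑ σ, if IsPlanarArr (G.comap ℓ.succAbove) σ ∧ σ r = 0 then G.degree (ℓ.succAbove p)
            else 0 := sum_congr rfl fun σ _ => card_filter_insertAt hT hℓ r σ
      _ = #{σ | IsPlanarArr (G.comap ℓ.succAbove) σ ∧ σ r = 0} * G.degree (ℓ.succAbove p) := by
          rw [sum_ite, sum_const_zero, add_zero, sum_const, smul_eq_mul]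
      _ = ∏ u, (G.degree u).factorial := by
          rw [card_filter_isPlanarArr_apply_eq_zero _ (hT.comap_succAbove hℓ1) r,
            prod_factorial_degree_of_forall_adj_iff hℓ, mul_comm]

/-- The number of planar arrangements of a free tree equals `n · ∏_u deg(u)!`. -/
theorem card_planarSet (n : ℕ) (G : SimpleGraph (Fin n)) (hT : G.IsTree) :
    (planarSet G).card = n * ∏ u : Fin n, (G.degree u).factorial := by
  obtain _ | k := n
  · exact hT.connected.nonempty.some.elim0
  rw [card_eq_sum_card_fiberwise (f := fun π => π.symm 0) (t := univ) fun _ _ => mem_univ _]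
  have fiber : ∀ r, {π ∈ planarSet G | π.symm 0 = r} =
      ({π | IsPlanarArr G π ∧ π r = 0} : Finset (Equiv.Perm (Fin (k + 1)))) := by
    intro r
    ext π
    simp only [planarSet, mem_filter, mem_univ, true_and, Equiv.symm_apply_eq]
    exact and_congr_right fun _ => eq_comm
  simp_rw [fiber, card_filter_isPlanarArr_apply_eq_zero G hT, sum_const, card_univ,
    Fintype.card_fin, smul_eq_mul]
end

section
/- For a free tree T on n vertices rooted at any vertex u, the number of projective arrangements of the rooted tree T^u in which u occupies the first position equals ∏_{v ∈ V} deg(v)!, independently of the choice of u. -/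
open Finset

attribute [local instance] Classical.propDecidable

/-!
With the root first, a projective arrangement is just a planar one, and planarity amounts to
every subtree occupying an interval of positions. Such an arrangement is determined by local data:
at each vertex `v`, the relative order of the intervals of its children's subtrees and of `v`
itself, that is, an ordering of the `deg v` neighbours of `v` in which the parent stands for `v`.
Indeed two vertices compare as their branches at a separating common ancestor do. Conversely,
every family of local orderings is realised by sorting the vertices lexicographically by the
local ranks read along their paths from the root. Hence there are `∏ v, (deg v)!` arrangements.
-/

section Order

variable {α β : Type*} {k : ℕ}

noncomputable def rankEquiv [Fintype α] [LinearOrder β] (f : α → β)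
    (hf : Function.Injective f) (hk : Fintype.card α = k) : α ≃ Fin k :=
  letI := LinearOrder.lift' f hf
  (Fintype.orderIsoFinOfCardEq α hk).symm.toEquiv

lemma rankEquiv_lt_rankEquiv_iff [Fintype α] [LinearOrder β] {f : α → β}
    {hf : Function.Injective f} {hk : Fintype.card α = k} {a b : α} :
    rankEquiv f hf hk a < rankEquiv f hf hk b ↔ f a < f b :=
  letI := LinearOrder.lift' f hf
  (Fintype.orderIsoFinOfCardEq α hk).symm.lt_iff_lt

lemma Equiv.ext_of_lt_iff {e₁ e₂ : α ≃ Fin k}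
    (h : ∀ a b, e₁ a < e₁ b ↔ e₂ a < e₂ b) : e₁ = e₂ := by
  let f : Fin k ≃o Fin k := ⟨e₁.symm.trans e₂, fun {i j} => by
    rw [← not_lt, ← not_lt, not_iff_not, Equiv.trans_apply, Equiv.trans_apply, ← h]
    simp⟩
  ext a
  simpa [f] using
    congrArg (fun g : Fin k ≃o Fin k => (g (e₁ a) : ℕ))
      (Subsingleton.elim f (OrderIso.refl _)).symm

lemma Equiv.Perm.apply_lt_apply_of_val_eq_zero {n : ℕ} {π : Equiv.Perm (Fin n)} {r x : Fin n}
    (h0 : (π r : ℕ) = 0) (hx : x ≠ r) : π r < π x :=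
  Fin.lt_def.2 (h0 ▸ Nat.pos_of_ne_zero fun h => hx (π.injective (Fin.ext (h.trans h0.symm))))

lemma Equiv.Perm.val_eq_zero_of_forall_le {n : ℕ} {π : Equiv.Perm (Fin n)} {r : Fin n}
    (h : ∀ x, π r ≤ π x) : (π r : ℕ) = 0 :=
  Nat.le_zero.1 (by simpa using Fin.le_def.1 (h (π.symm ⟨0, r.pos⟩)))

lemma List.append_cons_lt_append_cons_iff [LinearOrder α] {a b : α}
    (hab : a ≠ b) (p s t : List α) : p ++ a :: s < p ++ b :: t ↔ a < b := by
  have key : ∀ {a b : α} {s t : List α}, a < b → p ++ a :: s < p ++ b :: t :=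
    fun h => List.Lex.append_left _ (List.Lex.rel h) p
  exact ⟨fun h => (lt_or_gt_of_ne hab).resolve_right fun h' => lt_asymm h (key h'), key⟩

end Order

namespace SimpleGraph

section RootedTree

variable {V : Type*} {G : SimpleGraph V} {r a b m s t v w x y : V}

/-- In `G` rooted at `r`, the vertex `x` lies in the subtree of `a`. -/
def IsAncestor (G : SimpleGraph V) (r a x : V) : Prop :=
  G.dist r x = G.dist r a + G.dist a x

lemma isAncestor_refl (G : SimpleGraph V) (r a : V) : G.IsAncestor r a a := by
  simp [IsAncestor]

lemma isAncestor_root (G : SimpleGraph V) (r x : V) : G.IsAncestor r r x := by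
  simp [IsAncestor]

lemma isAncestor_of_adj (h : G.Adj v w) (hd : G.dist r w = G.dist r v + 1) :
    G.IsAncestor r v w := by
  rwa [IsAncestor, dist_eq_one_iff_adj.2 h]

lemma IsAncestor.depth_le (h : G.IsAncestor r a x) : G.dist r a ≤ G.dist r x := by
  unfold IsAncestor at h; omega

lemma IsAncestor.eq_of_depth_le (hc : G.Connected) (h : G.IsAncestor r a x)
    (hd : G.dist r x ≤ G.dist r a) : a = x :=
  hc.dist_eq_zero_iff.1 (by unfold IsAncestor at h; omega)

lemma IsAncestor.antisymm (hc : G.Connected) (hax : G.IsAncestor r a x)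
    (hxa : G.IsAncestor r x a) : a = x :=
  hax.eq_of_depth_le hc hxa.depth_le

lemma IsAncestor.trans (hc : G.Connected) (hab : G.IsAncestor r a b)
    (hbx : G.IsAncestor r b x) : G.IsAncestor r a x := by
  have := hc.dist_triangle (u := r) (v := a) (w := x)
  have := hc.dist_triangle (u := a) (v := b) (w := x)
  unfold IsAncestor at *; omega

lemma Walk.dist_add_dist_of_mem_support_s4 {p : G.Walk a b} (hp : p.length = G.dist a b)
    (hx : x ∈ p.support) : G.dist a x + G.dist x b = G.dist a b := by
  classical
  rw [← hp, ← p.take_spec hx, Walk.length_append,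
    length_eq_dist_of_subwalk hp (p.isSubwalk_takeUntil hx),
    length_eq_dist_of_subwalk hp (p.isSubwalk_dropUntil hx)]

lemma IsTree.isAncestor_iff_mem_support (hT : G.IsTree) {p : G.Walk r x}
    (hp : p.length = G.dist r x) : G.IsAncestor r a x ↔ a ∈ p.support := by
  refine ⟨fun h => ?_, fun ha => (p.dist_add_dist_of_mem_support_s4 hp ha).symm⟩
  obtain ⟨q₁, hq₁⟩ := hT.connected.exists_walk_length_eq_dist r a
  obtain ⟨q₂, hq₂⟩ := hT.connected.exists_walk_length_eq_dist a x
  have hq : (q₁.append q₂).length = G.dist r x := by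
    rw [Walk.length_append, hq₁, hq₂, h]
  obtain rfl : q₁.append q₂ = p := congrArg Subtype.val <|
    (hT.isAcyclic.subsingleton_path r x).elim
      ⟨_, (q₁.append q₂).isPath_of_length_eq_dist hq⟩ ⟨p, p.isPath_of_length_eq_dist hp⟩
  exact (Walk.mem_support_append_iff _ _).2 (Or.inl q₁.end_mem_support)

lemma IsAncestor.exists_walk (hc : G.Connected) (h : G.IsAncestor r v s) :
    ∃ p : G.Walk v s, ∀ x ∈ p.support, G.IsAncestor r v x := by
  obtain ⟨p, hp⟩ := hc.exists_walk_length_eq_dist v s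
  refine ⟨p, fun x hx => ?_⟩
  have := p.dist_add_dist_of_mem_support_s4 hp hx
  have := hc.dist_triangle (u := r) (v := v) (w := x)
  have := hc.dist_triangle (u := r) (v := x) (w := s)
  unfold IsAncestor at *; omega

lemma IsTree.isAncestor_total (hT : G.IsTree) (ha : G.IsAncestor r a x)
    (hb : G.IsAncestor r b x) : G.IsAncestor r a b ∨ G.IsAncestor r b a := by
  classical
  obtain ⟨p, hp⟩ := hT.connected.exists_walk_length_eq_dist r x
  have hbp := (hT.isAncestor_iff_mem_support hp).1 hb
  have hap := (hT.isAncestor_iff_mem_support hp).1 ha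
  rw [← p.take_spec hbp, Walk.mem_support_append_iff] at hap
  rcases hap with hap | hap
  · exact Or.inl ((hT.isAncestor_iff_mem_support
      (length_eq_dist_of_subwalk hp (p.isSubwalk_takeUntil hbp))).2 hap)
  · have := (p.dropUntil b hbp).dist_add_dist_of_mem_support_s4
      (length_eq_dist_of_subwalk hp (p.isSubwalk_dropUntil hbp)) hap
    right; unfold IsAncestor at *; omega

lemma IsTree.eq_of_isAncestor_of_depth_eq (hT : G.IsTree) (ha : G.IsAncestor r a x)
    (hb : G.IsAncestor r b x) (hd : G.dist r a = G.dist r b) : a = b :=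
  (hT.isAncestor_total ha hb).elim (fun h => h.eq_of_depth_le hT.connected hd.ge)
    fun h => (h.eq_of_depth_le hT.connected hd.le).symm

lemma IsTree.isAncestor_or_isAncestor_of_adj (hT : G.IsTree) (h : G.Adj v w) :
    G.IsAncestor r v w ∨ G.IsAncestor r w v :=
  (hT.dist_eq_dist_add_one_of_adj r h).elim (fun hd => Or.inr (isAncestor_of_adj h.symm hd))
    fun hd => Or.inl (isAncestor_of_adj h hd)

lemma IsAncestor.of_adj_of_ne (hT : G.IsTree) (hs : G.IsAncestor r v s) (hsv : s ≠ v)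
    (h : G.Adj s t) : G.IsAncestor r v t := by
  rcases hT.dist_eq_dist_add_one_of_adj r h with hd | hd
  · have hts := isAncestor_of_adj h.symm hd
    rcases hT.isAncestor_total hs hts with hvt | htv
    · exact hvt
    · have := htv.depth_le
      have := hs.depth_le
      rcases Nat.lt_or_ge (G.dist r v) (G.dist r s) with hlt | hge
      · exact (htv.eq_of_depth_le hT.connected (by omega)) ▸ isAncestor_refl G r t
      · exact absurd (hs.eq_of_depth_le hT.connected hge).symm hsv
  · exact hs.trans hT.connected (isAncestor_of_adj h hd)

noncomputable def stepToward (G : SimpleGraph V) (v x : V) : V :=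
  @Classical.epsilon V ⟨v⟩ fun w => G.Adj v w ∧ G.dist w x + 1 = G.dist v x

lemma stepToward_spec (hc : G.Connected) (h : v ≠ x) :
    G.Adj v (G.stepToward v x) ∧ G.dist (G.stepToward v x) x + 1 = G.dist v x := by
  obtain ⟨p, hp⟩ := hc.exists_walk_length_eq_dist v x
  cases p with
  | nil => exact absurd rfl h
  | @cons _ w _ hadj q =>
    refine Classical.epsilon_spec (p := fun w => G.Adj v w ∧ G.dist w x + 1 = G.dist v x)
      ⟨w, hadj, le_antisymm ?_ ?_⟩
    · have := dist_le q
      rw [Walk.length_cons] at hp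
      omega
    · have := hc.dist_triangle (u := v) (v := w) (w := x)
      rw [dist_eq_one_iff_adj.2 hadj] at this
      omega

lemma IsAncestor.stepToward_spec (hc : G.Connected) (h : G.IsAncestor r v x) (hne : v ≠ x) :
    G.dist r (G.stepToward v x) = G.dist r v + 1 ∧ G.IsAncestor r (G.stepToward v x) x := by
  obtain ⟨hadj, hd⟩ := SimpleGraph.stepToward_spec hc hne
  have := hc.dist_triangle (u := r) (v := v) (w := G.stepToward v x)
  have := hc.dist_triangle (u := r) (v := G.stepToward v x) (w := x)
  rw [dist_eq_one_iff_adj.2 hadj] at *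
  unfold IsAncestor at *; omega

lemma stepToward_root_spec (hc : G.Connected) (hx : x ≠ r) :
    G.dist r (G.stepToward x r) + 1 = G.dist r x ∧ G.IsAncestor r (G.stepToward x r) x := by
  obtain ⟨hadj, hd⟩ := stepToward_spec hc hx
  rw [dist_comm, dist_comm (u := x)] at hd
  exact ⟨hd, isAncestor_of_adj hadj.symm hd.symm⟩

lemma IsTree.stepToward_eq (hT : G.IsTree) (h : G.Adj v w) (hd : G.dist r w = G.dist r v + 1)
    (hx : G.IsAncestor r w x) : G.stepToward v x = w := by
  have hvx : v ≠ x := by rintro rfl; have := hx.depth_le; omega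
  obtain ⟨hd', hx'⟩ :=
    ((isAncestor_of_adj h hd).trans hT.connected hx).stepToward_spec hT.connected hvx
  exact hT.eq_of_isAncestor_of_depth_eq hx' hx (by omega)

lemma IsTree.stepToward_root_eq (hT : G.IsTree) (h : G.Adj x w)
    (hd : G.dist r x = G.dist r w + 1) : G.stepToward x r = w := by
  have hxr : x ≠ r := by rintro rfl; simp at hd
  obtain ⟨hd', hx'⟩ := stepToward_root_spec hT.connected hxr
  exact hT.eq_of_isAncestor_of_depth_eq hx' (isAncestor_of_adj h.symm hd) (by omega)

/-- The neighbour of `m` towards `x`, where `m` itself is reached through its parent. -/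
noncomputable def branch (G : SimpleGraph V) (r m x : V) : V :=
  if x = m then G.stepToward m r else G.stepToward m x

lemma branch_self : G.branch r m m = G.stepToward m r := if_pos rfl

lemma branch_of_ne (h : x ≠ m) : G.branch r m x = G.stepToward m x := if_neg h

lemma adj_branch (hc : G.Connected) (hx : x ≠ r) :
    G.Adj m (G.branch r m x) := by
  by_cases hxm : x = m
  · subst hxm; rw [branch_self]; exact (stepToward_spec hc hx).1
  · rw [branch_of_ne hxm]; exact (stepToward_spec hc (Ne.symm hxm)).1

lemma IsTree.branch_eq_of_isAncestor (hT : G.IsTree) (hm : G.IsAncestor r m v) (hmv : m ≠ v)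
    (hs : G.IsAncestor r v s) : G.branch r m s = G.branch r m v := by
  have hsm : s ≠ m := by
    rintro rfl; exact hmv (hm.antisymm hT.connected hs)
  obtain ⟨hd, hcv⟩ := hm.stepToward_spec hT.connected hmv
  rw [branch_of_ne hsm, branch_of_ne (Ne.symm hmv)]
  exact hT.stepToward_eq (stepToward_spec hT.connected hmv).1 hd (hcv.trans hT.connected hs)

lemma branch_self_ne (hc : G.Connected) (hm : m ≠ r) (hy : G.IsAncestor r m y) (hym : y ≠ m) :
    G.branch r m m ≠ G.branch r m y := by
  intro h
  rw [branch_self, branch_of_ne hym] at h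
  have := (stepToward_root_spec hc hm).1
  have := (hy.stepToward_spec hc (Ne.symm hym)).1
  rw [h] at *; omega

lemma IsTree.exists_branch_ne (hT : G.IsTree) (hxy : x ≠ y) (hx : x ≠ r) (hy : y ≠ r) :
    ∃ m, G.IsAncestor r m x ∧ G.IsAncestor r m y ∧ G.branch r m x ≠ G.branch r m y := by
  -- otherwise the common branches would give common ancestors of every depth
  by_contra! H
  have deeper : ∀ k, ∃ m, G.IsAncestor r m x ∧ G.IsAncestor r m y ∧ G.dist r m = k := by
    intro k
    induction k with
    | zero => exact ⟨r, isAncestor_root G r x, isAncestor_root G r y, dist_self⟩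
    | succ k ih =>
      obtain ⟨m, hmx, hmy, rfl⟩ := ih
      have hb := H m hmx hmy
      have hxm : x ≠ m := by
        rintro rfl; exact branch_self_ne hT.connected hx hmy (Ne.symm hxy) hb
      have hym : y ≠ m := by
        rintro rfl; exact branch_self_ne hT.connected hy hmx (hxy) hb.symm
      rw [branch_of_ne hxm, branch_of_ne hym] at hb
      obtain ⟨hd, hcx⟩ := hmx.stepToward_spec hT.connected (Ne.symm hxm)
      exact ⟨_, hcx, hb ▸ (hmy.stepToward_spec hT.connected (Ne.symm hym)).2, hd⟩
  obtain ⟨m, hmx, -, hm⟩ := deeper (G.dist r x + 1)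
  have := hmx.depth_le
  omega

/-- The vertex standing for the neighbour `w` of `v` when ordering the pieces of the subtree of
`v`: a child stands for its own subtree, the parent for `v` itself. -/
noncomputable def blockRep (G : SimpleGraph V) (r v w : V) : V :=
  if G.dist r v < G.dist r w then w else v

lemma IsTree.branch_blockRep (hT : G.IsTree) (h : G.Adj v w) :
    G.branch r v (G.blockRep r v w) = w := by
  rcases hT.dist_eq_dist_add_one_of_adj r h with hd | hd
  · rw [blockRep, if_neg (by omega), branch_self, hT.stepToward_root_eq h hd]
  · rw [blockRep, if_pos (by omega), branch_of_ne h.ne',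
      hT.stepToward_eq h hd (isAncestor_refl G r w)]

lemma IsTree.injOn_blockRep (hT : G.IsTree) (v : V) :
    Set.InjOn (G.blockRep r v) (G.neighborSet v) := fun a ha b hb h => by
  rw [← hT.branch_blockRep (r := r) ha, ← hT.branch_blockRep (r := r) hb, h]

lemma IsTree.isAncestor_blockRep (hT : G.IsTree) (h : G.Adj v w) :
    G.IsAncestor r v (G.blockRep r v w) := by
  rcases hT.dist_eq_dist_add_one_of_adj r h with hd | hd
  · rw [blockRep, if_neg (by omega)]; exact isAncestor_refl G r v
  · rw [blockRep, if_pos (by omega)]; exact isAncestor_of_adj h hd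

lemma IsTree.blockRep_ne_root (hT : G.IsTree) (h : G.Adj v w) : G.blockRep r v w ≠ r := by
  rcases hT.dist_eq_dist_add_one_of_adj r h with hd | hd
  · rw [blockRep, if_neg (by omega)]; rintro rfl; simp at hd
  · rw [blockRep, if_pos (by omega)]; rintro rfl; simp at hd

lemma blockRep_branch_self (hc : G.Connected) (hm : m ≠ r) :
    G.blockRep r m (G.branch r m m) = m := by
  rw [branch_self, blockRep, if_neg]
  have := (stepToward_root_spec hc hm).1
  omega

lemma blockRep_branch_of_ne (hc : G.Connected) (hmx : G.IsAncestor r m x) (hxm : x ≠ m) :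
    G.blockRep r m (G.branch r m x) = G.stepToward m x := by
  rw [branch_of_ne hxm, blockRep, if_pos]
  have := (hmx.stepToward_spec hc (Ne.symm hxm)).1
  omega

lemma IsTree.not_isAncestor_stepToward (hT : G.IsTree) (hmx : G.IsAncestor r m x) (hxm : x ≠ m)
    (hb : G.branch r m x ≠ G.branch r m y) : ¬ G.IsAncestor r (G.stepToward m x) y := by
  intro hy
  obtain ⟨hd, hcx⟩ := hmx.stepToward_spec hT.connected (Ne.symm hxm)
  have hmc := isAncestor_of_adj (stepToward_spec hT.connected (Ne.symm hxm)).1 hd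
  have hne : m ≠ G.stepToward m x := fun h => by rw [← h] at hd; omega
  exact hb ((hT.branch_eq_of_isAncestor hmc hne hcx).trans
    (hT.branch_eq_of_isAncestor hmc hne hy).symm)

variable (G r) in
/-- For connected `G` the guard holds exactly when `x ≠ r`; it makes the recursion
well founded. -/
noncomputable def pathLabels (F : V → V → ℕ) (x : V) : List ℕ :=
  if G.dist r (G.stepToward x r) < G.dist r x then
    pathLabels F (G.stepToward x r) ++ [F (G.stepToward x r) x]
  else []
termination_by G.dist r x

variable (G r) in
noncomputable def address (F : V → V → ℕ) (x : V) : List ℕ :=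
  if x = r then [] else G.pathLabels r F x ++ [F x (G.branch r x x)]

variable {F : V → V → ℕ}

lemma pathLabels_of_ne (hc : G.Connected) (hx : x ≠ r) :
    G.pathLabels r F x = G.pathLabels r F (G.stepToward x r) ++ [F (G.stepToward x r) x] := by
  rw [pathLabels, if_pos (by have := (stepToward_root_spec hc hx).1; omega)]

lemma IsTree.pathLabels_eq_append (hT : G.IsTree) (h : G.IsAncestor r v x) (hvx : v ≠ x) :
    ∃ l, G.pathLabels r F x = G.pathLabels r F v ++ F v (G.stepToward v x) :: l := by
  obtain ⟨k, hk⟩ : ∃ k, G.dist r x = k := ⟨_, rfl⟩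
  induction k using Nat.strong_induction_on generalizing x with
  | _ k ih =>
    have hxr : x ≠ r := by
      rintro rfl; exact hvx (h.eq_of_depth_le hT.connected (by simp))
    obtain ⟨hpd, hpx⟩ := stepToward_root_spec hT.connected hxr
    have hadj := (stepToward_spec hT.connected hxr).1
    rw [pathLabels_of_ne hT.connected hxr]
    by_cases hpv : G.stepToward x r = v
    · subst hpv
      rw [hT.stepToward_eq hadj.symm hpd.symm (isAncestor_refl G r x)]
      exact ⟨[], rfl⟩
    · have hvp := h.of_adj_of_ne hT (Ne.symm hvx) hadj
      obtain ⟨l, hl⟩ := ih _ (by omega) hvp (Ne.symm hpv) rfl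
      obtain ⟨hcd, hcp⟩ := hvp.stepToward_spec hT.connected (Ne.symm hpv)
      rw [hT.stepToward_eq (stepToward_spec hT.connected (Ne.symm hpv)).1 hcd
        (hcp.trans hT.connected hpx), hl]
      exact ⟨l ++ [F (G.stepToward x r) x], by simp⟩

lemma IsTree.address_eq_append (hT : G.IsTree) (h : G.IsAncestor r m x) (hx : x ≠ r) :
    ∃ l, G.address r F x = G.pathLabels r F m ++ F m (G.branch r m x) :: l := by
  rw [address, if_neg hx]
  by_cases hxm : x = m
  · subst hxm; exact ⟨[], rfl⟩
  · obtain ⟨l, hl⟩ := hT.pathLabels_eq_append (F := F) h (Ne.symm hxm)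
    refine ⟨l ++ [F x (G.branch r x x)], ?_⟩
    rw [hl, branch_of_ne hxm]
    simp

lemma IsTree.address_lt_address_iff (hT : G.IsTree) (hF : ∀ v, Set.InjOn (F v) (G.neighborSet v))
    (hmx : G.IsAncestor r m x) (hmy : G.IsAncestor r m y) (hb : G.branch r m x ≠ G.branch r m y)
    (hx : x ≠ r) (hy : y ≠ r) :
    G.address r F x < G.address r F y ↔ F m (G.branch r m x) < F m (G.branch r m y) := by
  obtain ⟨lx, hlx⟩ := hT.address_eq_append (F := F) hmx hx
  obtain ⟨ly, hly⟩ := hT.address_eq_append (F := F) hmy hy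
  rw [hlx, hly]
  exact List.append_cons_lt_append_cons_iff
    (fun h => hb (hF m (adj_branch hT.connected hx) (adj_branch hT.connected hy) h)) _ _ _

lemma address_root : G.address r F r = [] := if_pos rfl

lemma address_root_lt (hy : y ≠ r) : G.address r F r < G.address r F y := by
  rw [address_root, address, if_neg hy]
  cases G.pathLabels r F y <;> exact List.nil_lt_cons _ _

lemma IsTree.address_injective (hT : G.IsTree) (hF : ∀ v, Set.InjOn (F v) (G.neighborSet v)) :
    Function.Injective (G.address r F) := by
  intro x y hxy
  by_contra hne
  rcases eq_or_ne x r with rfl | hx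
  · exact (address_root_lt (Ne.symm hne)).ne hxy
  rcases eq_or_ne y r with rfl | hy
  · exact (address_root_lt hx).ne hxy.symm
  obtain ⟨m, hmx, hmy, hb⟩ := hT.exists_branch_ne hne hx hy
  rcases lt_or_gt_of_ne fun h => hb (hF m (adj_branch hT.connected hx)
    (adj_branch hT.connected hy) h) with h | h
  · exact ((hT.address_lt_address_iff hF hmx hmy hb hx hy).2 h).ne hxy
  · exact ((hT.address_lt_address_iff hF hmy hmx hb.symm hy hx).2 h).ne hxy.symm

lemma IsTree.not_address_lt_lt (hT : G.IsTree) (hF : ∀ v, Set.InjOn (F v) (G.neighborSet v))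
    (hs : G.IsAncestor r v s) (ht : G.IsAncestor r v t) (hz : ¬ G.IsAncestor r v z) :
    ¬ (G.address r F s < G.address r F z ∧ G.address r F z < G.address r F t) := by
  rintro ⟨hsz, hzt⟩
  have hvr : v ≠ r := fun h => hz (h ▸ isAncestor_root G r z)
  have ne_root : ∀ {x}, G.IsAncestor r v x → x ≠ r := fun hx hxr =>
    hvr ((hx.eq_of_depth_le hT.connected (by simp [hxr])).trans hxr)
  rcases eq_or_ne z r with rfl | hzr
  · exact (address_root_lt (ne_root hs)).not_gt hsz
  obtain ⟨m, hmv, hmz, hb⟩ :=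
    hT.exists_branch_ne (fun (h : v = z) => hz (h ▸ isAncestor_refl G r v)) hvr hzr
  have hmv' : m ≠ v := by rintro rfl; exact hz hmz
  have hbs := hT.branch_eq_of_isAncestor hmv hmv' hs
  have hbt := hT.branch_eq_of_isAncestor hmv hmv' ht
  rw [hT.address_lt_address_iff hF (hmv.trans hT.connected hs) hmz (by rwa [hbs]) (ne_root hs) hzr,
    hbs] at hsz
  rw [hT.address_lt_address_iff hF hmz (hmv.trans hT.connected ht) (by rwa [hbt, ne_comm])
    hzr (ne_root ht), hbt] at hzt
  exact lt_asymm hsz hzt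

end RootedTree


section Arrangement

variable {n : ℕ} {G : SimpleGraph (Fin n)} {r m s t v x y z : Fin n} {π : Equiv.Perm (Fin n)}

def HasIntervalSubtrees (G : SimpleGraph (Fin n)) (r : Fin n) (π : Equiv.Perm (Fin n)) : Prop :=
  ∀ v s t z, G.IsAncestor r v s → G.IsAncestor r v t → π s < π z → π z < π t →
    G.IsAncestor r v z

namespace HasIntervalSubtrees

lemma lt_iff_lt_left (hI : HasIntervalSubtrees G r π) (hs : G.IsAncestor r v s)
    (ht : G.IsAncestor r v t) (hz : ¬ G.IsAncestor r v z) : π s < π z ↔ π t < π z := by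
  have key : ∀ {s t}, G.IsAncestor r v s → G.IsAncestor r v t → π s < π z → π t < π z :=
    fun hs ht h => lt_of_le_of_ne (not_lt.1 fun h' => hz (hI v _ _ z hs ht h h'))
      fun he => hz (π.injective he ▸ ht)
  exact ⟨key hs ht, key ht hs⟩

lemma lt_iff_lt_right (hI : HasIntervalSubtrees G r π) (hs : G.IsAncestor r v s)
    (ht : G.IsAncestor r v t) (hz : ¬ G.IsAncestor r v z) : π z < π s ↔ π z < π t := by
  have key : ∀ {s t}, G.IsAncestor r v s → G.IsAncestor r v t → π z < π s → π z < π t :=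
    fun hs ht h => lt_of_le_of_ne (not_lt.1 fun h' => hz (hI v _ _ z ht hs h' h))
      fun he => hz (π.injective he ▸ ht)
  exact ⟨key hs ht, key ht hs⟩

lemma lt_iff_blockRep_lt (hI : HasIntervalSubtrees G r π) (hT : G.IsTree)
    (hmx : G.IsAncestor r m x) (hmy : G.IsAncestor r m y) (hb : G.branch r m x ≠ G.branch r m y)
    (hx : x ≠ r) (hy : y ≠ r) :
    π x < π y ↔
      π (G.blockRep r m (G.branch r m x)) < π (G.blockRep r m (G.branch r m y)) := by
  have hc := hT.connected
  by_cases hxm : x = m <;> by_cases hym : y = m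
  · exact absurd (by rw [hxm, hym]) hb
  · subst hxm
    rw [blockRep_branch_self hc hx, blockRep_branch_of_ne hc hmy hym]
    exact hI.lt_iff_lt_right (hmy.stepToward_spec hc (Ne.symm hym)).2 (isAncestor_refl G r _)
      (hT.not_isAncestor_stepToward hmy hym hb.symm)
  · subst hym
    rw [blockRep_branch_of_ne hc hmx hxm, blockRep_branch_self hc hy]
    exact hI.lt_iff_lt_left (hmx.stepToward_spec hc (Ne.symm hxm)).2 (isAncestor_refl G r _)
      (hT.not_isAncestor_stepToward hmx hxm hb)
  · rw [blockRep_branch_of_ne hc hmx hxm, blockRep_branch_of_ne hc hmy hym]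
    have hcx := (hmx.stepToward_spec hc (Ne.symm hxm)).2
    exact (hI.lt_iff_lt_left hcx (isAncestor_refl G r _)
      (hT.not_isAncestor_stepToward hmx hxm hb)).trans
      (hI.lt_iff_lt_right (hmy.stepToward_spec hc (Ne.symm hym)).2 (isAncestor_refl G r _)
        fun h => hT.not_isAncestor_stepToward hmy hym hb.symm (h.trans hc hcx))

lemma isPlanarArr (hI : HasIntervalSubtrees G r π) (hT : G.IsTree) : IsPlanarArr G π := by
  rintro a b c d hab hcd ⟨h₁, h₂, h₃⟩
  have hc := hT.connected
  have hac : a ≠ c := fun h => h₁.ne (congrArg π h)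
  have hcb : c ≠ b := fun h => h₂.ne (congrArg π h)
  have hbd : b ≠ d := fun h => h₃.ne (congrArg π h)
  have had : a ≠ d := fun h => (h₁.trans (h₂.trans h₃)).ne (congrArg π h)
  rcases hT.isAncestor_or_isAncestor_of_adj (r := r) hab with hab' | hba'
  · have hac' := hI a a b c (isAncestor_refl G r a) hab' h₁ h₂
    rcases hT.isAncestor_or_isAncestor_of_adj (r := r) hcd with hcd' | hdc'
    · have hcb' := hI c c d b (isAncestor_refl G r c) hcd' h₂ h₃
      exact hac (hac'.antisymm hc (hcb'.of_adj_of_ne hT hcb.symm hab.symm))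
    · have hdb' := hI d c d b hdc' (isAncestor_refl G r d) h₂ h₃
      exact had ((hac'.of_adj_of_ne hT hac.symm hcd).antisymm hc
        (hdb'.of_adj_of_ne hT hbd hab.symm))
  · have hbc' := hI b a b c hba' (isAncestor_refl G r b) h₁ h₂
    rcases hT.isAncestor_or_isAncestor_of_adj (r := r) hcd with hcd' | hdc'
    · exact hcb (hbc'.antisymm hc (hI c c d b (isAncestor_refl G r c) hcd' h₂ h₃)).symm
    · have hdb' := hI d c d b hdc' (isAncestor_refl G r d) h₂ h₃
      exact hbd (hdb'.antisymm hc (hbc'.of_adj_of_ne hT hcb hcd)).symm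

end HasIntervalSubtrees

lemma _root_.IsPlanarArr.hasIntervalSubtrees (hP : IsPlanarArr G π) (hT : G.IsTree)
    (h0 : (π r : ℕ) = 0) : HasIntervalSubtrees G r π := by
  intro v s t z hs ht hsz hzt
  by_contra hz
  obtain ⟨w₁, hw₁⟩ := hs.exists_walk hT.connected
  obtain ⟨w₂, hw₂⟩ := ht.exists_walk hT.connected
  have hw : ∀ x ∈ (w₁.reverse.append w₂).support, G.IsAncestor r v x := by
    intro x hx
    rw [Walk.mem_support_append_iff, Walk.support_reverse, List.mem_reverse] at hx
    exact hx.elim (hw₁ x) (hw₂ x)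
  -- an edge `d` of the subtree of `v` jumps over `z`
  obtain ⟨d, hd, hd₁, hd₂⟩ :=
    (w₁.reverse.append w₂).exists_boundary_dart {x | π x < π z} hsz (not_lt.2 hzt.le)
  have ha := hw _ (Walk.dart_fst_mem_support_of_mem_darts _ hd)
  have hb := hw _ (Walk.dart_snd_mem_support_of_mem_darts _ hd)
  have hzb : π z < π d.snd := lt_of_le_of_ne (not_lt.1 hd₂) fun h => hz (π.injective h ▸ hb)
  -- the path from `z` up to the root avoids the subtree of `v`, so an edge `e` of it leaves
  -- the span of `d` without ending at `d.fst` or `d.snd`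
  obtain ⟨p, hp⟩ := hT.connected.exists_walk_length_eq_dist r z
  have hout : ∀ x ∈ p.reverse.support, ¬ G.IsAncestor r v x := fun x hx hvx =>
    hz (hvx.trans hT.connected ((hT.isAncestor_iff_mem_support hp).2 (by simpa using hx)))
  obtain ⟨e, he, he₁, he₂⟩ := p.reverse.exists_boundary_dart
    {x | π d.fst < π x ∧ π x < π d.snd} ⟨hd₁, hzb⟩ fun h => by
      have := Fin.lt_def.1 h.1; omega
  have he₃ := hout _ (Walk.dart_snd_mem_support_of_mem_darts _ he)
  rcases lt_or_gt_of_ne (π.injective.ne fun (h : e.snd = d.fst) => he₃ (h ▸ ha)) with h | h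
  · exact hP e.snd e.fst d.fst d.snd e.adj.symm d.adj ⟨h, he₁.1, he₁.2⟩
  · refine hP d.fst d.snd e.fst e.snd d.adj e.adj ⟨he₁.1, he₁.2, lt_of_le_of_ne
      (not_lt.1 fun h' => he₂ ⟨h, h'⟩) ?_⟩
    exact (π.injective.ne fun (h : e.snd = d.snd) => he₃ (h ▸ hb)).symm

noncomputable def localOrder (hT : G.IsTree) (r : Fin n) (π : Equiv.Perm (Fin n)) (v : Fin n) :
    G.neighborFinset v ≃ Fin (G.degree v) :=
  rankEquiv (fun w : G.neighborFinset v => π (G.blockRep r v w))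
    (fun a b h => Subtype.ext (hT.injOn_blockRep v ((G.mem_neighborFinset v a).1 a.2)
      ((G.mem_neighborFinset v b).1 b.2) (π.injective h)))
    (by rw [Fintype.card_coe, card_neighborFinset_eq_degree])

lemma localOrder_lt_iff {hT : G.IsTree} {a b : G.neighborFinset v} :
    localOrder hT r π v a < localOrder hT r π v b ↔
      π (G.blockRep r v a) < π (G.blockRep r v b) :=
  rankEquiv_lt_rankEquiv_iff

lemma IsTree.eq_of_localOrder_eq (hT : G.IsTree) {π π' : Equiv.Perm (Fin n)}
    (hπ : IsPlanarArr G π) (h0 : (π r : ℕ) = 0) (hπ' : IsPlanarArr G π')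
    (h0' : (π' r : ℕ) = 0)
    (h : localOrder hT r π = localOrder hT r π') : π = π' := by
  have hI := hπ.hasIntervalSubtrees hT h0
  have hI' := hπ'.hasIntervalSubtrees hT h0'
  refine Equiv.ext_of_lt_iff fun x y => ?_
  rcases eq_or_ne x y with rfl | hxy
  · simp
  rcases eq_or_ne x r with rfl | hx
  · exact iff_of_true (Equiv.Perm.apply_lt_apply_of_val_eq_zero h0 (Ne.symm hxy))
      (Equiv.Perm.apply_lt_apply_of_val_eq_zero h0' (Ne.symm hxy))
  rcases eq_or_ne y r with rfl | hy
  · exact iff_of_false (Equiv.Perm.apply_lt_apply_of_val_eq_zero h0 hx).asymm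
      (Equiv.Perm.apply_lt_apply_of_val_eq_zero h0' hx).asymm
  obtain ⟨m, hmx, hmy, hb⟩ := hT.exists_branch_ne hxy hx hy
  let a : G.neighborFinset m := ⟨_, (G.mem_neighborFinset m _).2 (adj_branch hT.connected hx)⟩
  let b : G.neighborFinset m := ⟨_, (G.mem_neighborFinset m _).2 (adj_branch hT.connected hy)⟩
  calc π x < π y ↔ π (G.blockRep r m a) < π (G.blockRep r m b) :=
        hI.lt_iff_blockRep_lt hT hmx hmy hb hx hy
    _ ↔ localOrder hT r π m a < localOrder hT r π m b := localOrder_lt_iff.symm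
    _ ↔ localOrder hT r π' m a < localOrder hT r π' m b := by rw [h]
    _ ↔ π' (G.blockRep r m a) < π' (G.blockRep r m b) := localOrder_lt_iff
    _ ↔ π' x < π' y := (hI'.lt_iff_blockRep_lt hT hmx hmy hb hx hy).symm

lemma IsTree.localOrder_lt_iff_of_lt_iff_address (hT : G.IsTree) {F : Fin n → Fin n → ℕ}
    (hF : ∀ v, Set.InjOn (F v) (G.neighborSet v))
    (hπ : ∀ x y, π x < π y ↔ G.address r F x < G.address r F y) {a b : G.neighborFinset v}
    (hab : a ≠ b) : localOrder hT r π v a < localOrder hT r π v b ↔ F v a < F v b := by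
  have ha := (G.mem_neighborFinset v _).1 a.2
  have hb := (G.mem_neighborFinset v _).1 b.2
  have hab' : G.branch r v (G.blockRep r v a) ≠ G.branch r v (G.blockRep r v b) := by
    rw [hT.branch_blockRep ha, hT.branch_blockRep hb]
    exact Subtype.coe_ne_coe.2 hab
  rw [localOrder_lt_iff, hπ, hT.address_lt_address_iff hF (hT.isAncestor_blockRep ha)
    (hT.isAncestor_blockRep hb) hab' (hT.blockRep_ne_root ha) (hT.blockRep_ne_root hb),
    hT.branch_blockRep ha, hT.branch_blockRep hb]

lemma IsTree.exists_localOrder_eq (hT : G.IsTree)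
    (E : ∀ v, G.neighborFinset v ≃ Fin (G.degree v)) :
    ∃ π, IsPlanarArr G π ∧ (π r : ℕ) = 0 ∧ localOrder hT r π = E := by
  let F : Fin n → Fin n → ℕ := fun v w =>
    if h : w ∈ G.neighborFinset v then E v ⟨w, h⟩ else 0
  have hF : ∀ v, Set.InjOn (F v) (G.neighborSet v) := by
    intro v a ha b hb h
    have ha' := (G.mem_neighborFinset v a).2 ha
    have hb' := (G.mem_neighborFinset v b).2 hb
    simp only [F, dif_pos ha', dif_pos hb'] at h
    exact congrArg Subtype.val ((E v).injective (Fin.ext h))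
  let π : Equiv.Perm (Fin n) :=
    rankEquiv (G.address r F) (hT.address_injective hF) (Fintype.card_fin n)
  have hπ : ∀ x y, π x < π y ↔ G.address r F x < G.address r F y :=
    fun _ _ => rankEquiv_lt_rankEquiv_iff
  have hI : HasIntervalSubtrees G r π := fun v s t z hs ht hsz hzt => by_contra fun hz =>
    hT.not_address_lt_lt hF hs ht hz ⟨(hπ s z).1 hsz, (hπ z t).1 hzt⟩
  have hr : ∀ x, π r ≤ π x := fun x => (eq_or_ne x r).elim (fun h => h ▸ le_rfl)
    fun hx => ((hπ r x).2 (address_root_lt hx)).le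
  refine ⟨π, hI.isPlanarArr hT, Equiv.Perm.val_eq_zero_of_forall_le hr,
    funext fun v => Equiv.ext_of_lt_iff fun a b => ?_⟩
  rcases eq_or_ne a b with rfl | hab
  · simp
  rw [hT.localOrder_lt_iff_of_lt_iff_address hF hπ hab]
  simp only [F, dif_pos a.2, dif_pos b.2, Subtype.coe_eta, Fin.val_fin_lt]

lemma card_localOrders (G : SimpleGraph (Fin n)) :
    Fintype.card (∀ v, G.neighborFinset v ≃ Fin (G.degree v)) =
      ∏ v, (G.degree v).factorial := by
  have hcard : ∀ v, Fintype.card (G.neighborFinset v) = G.degree v := fun v => by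
    rw [Fintype.card_coe, card_neighborFinset_eq_degree]
  rw [Fintype.card_pi]
  exact prod_congr rfl fun v _ => by
    rw [Fintype.card_equiv (Fintype.equivFinOfCardEq (hcard v)), hcard v]

end Arrangement

end SimpleGraph

lemma mem_projSet1_iff {n : ℕ} {G : SimpleGraph (Fin n)} {r : Fin n}
    {π : Equiv.Perm (Fin n)} :
    π ∈ projSet1 G r ↔ IsPlanarArr G π ∧ (π r : ℕ) = 0 := by
  rw [projSet1, Finset.mem_filter]
  simp only [Finset.mem_univ, true_and, IsProjectiveArr]
  refine ⟨fun ⟨⟨hP, _⟩, h0⟩ => ⟨hP, h0⟩,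
    fun ⟨hP, h0⟩ => ⟨⟨hP, fun s t _ h => ?_⟩, h0⟩⟩
  have := Fin.lt_def.1 h.1
  omega

open SimpleGraph

/-- For any root `u`, the number of projective arrangements of `T^u` with `u` in the
first position equals `∏_v deg(v)!`, independently of `u`. -/
theorem card_projSet1 (n : ℕ) (G : SimpleGraph (Fin n)) (hT : G.IsTree) (u : Fin n) :
    (projSet1 G u).card = ∏ v : Fin n, (G.degree v).factorial := by
  rw [← card_localOrders G, ← card_univ]
  refine card_bij (fun π _ => localOrder hT u π) (fun _ _ => mem_univ _) ?_ ?_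
  · intro π hπ π' hπ' h
    rw [mem_projSet1_iff] at hπ hπ'
    exact hT.eq_of_localOrder_eq hπ.1 hπ.2 hπ'.1 hπ'.2 h
  · intro E _
    obtain ⟨π, hP, h0, hE⟩ := hT.exists_localOrder_eq (r := u) E
    exact ⟨π, mem_projSet1_iff.2 ⟨hP, h0⟩, hE⟩
end

section
/- Given a free tree T on n vertices, the expected sum of edge lengths in a uniformly random planar arrangement satisfies E_pl[D] = (1/n) Σ_{u∈V} E^1_pr[D | T^u], where E^1_pr[D | T^u] is the expected sum of edge lengths in a uniformly random projective arrangement of T rooted at u conditioned on u occupying position 1. -/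
open Finset

attribute [local instance] Classical.propDecidable

/-!
Rotating an arrangement cyclically (adding `r` to every position modulo `n`) keeps it planar, as it
preserves the cyclic order of the endpoints of any two edges. Hence the planar arrangements split
into `n` classes of equal size according to the vertex at position `0`. A planar arrangement with
`u` at position `0` is exactly a projective arrangement of `T^u` with `u` first, since no edge can
cover the first position.
-/

theorem Fin.cyclic_lt_of_add_right_lt {n : ℕ} {a b c d : Fin n} (r : Fin n)
    (hab : a + r < b + r) (hbc : b + r < c + r) (hcd : c + r < d + r) :
    (a < b ∧ b < c ∧ c < d) ∨ (b < c ∧ c < d ∧ d < a) ∨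
      (c < d ∧ d < a ∧ a < b) ∨ (d < a ∧ a < b ∧ b < c) := by
  simp only [Fin.lt_def, Fin.val_add_eq_ite] at *
  have := a.isLt; have := b.isLt; have := c.isLt; have := d.isLt; have := r.isLt
  split_ifs at hab hbc hcd <;> omega

theorem IsPlanarArr.trans_addRight {n : ℕ} [NeZero n] {G : SimpleGraph (Fin n)}
    {π : Equiv.Perm (Fin n)} (h : IsPlanarArr G π) (r : Fin n) :
    IsPlanarArr G (π.trans (Equiv.addRight r)) := by
  intro s t u v hst huv ⟨hsu, hut, htv⟩
  rcases Fin.cyclic_lt_of_add_right_lt r hsu hut htv with hc | hc | hc | hc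
  · exact h s t u v hst huv hc
  · exact h u v t s huv hst.symm hc
  · exact h t s v u hst.symm huv.symm hc
  · exact h v u s t huv.symm hst hc

theorem projSet1_eq_filter_planarSet {n : ℕ} [NeZero n] (G : SimpleGraph (Fin n)) (u : Fin n) :
    projSet1 G u = (planarSet G).filter (fun π => π u = 0) := by
  ext π
  simp only [projSet1, planarSet, IsProjectiveArr, mem_filter, mem_univ, true_and,
    Fin.val_eq_zero_iff]
  refine ⟨fun ⟨⟨hp, _⟩, h0⟩ => ⟨hp, h0⟩, fun ⟨hp, h0⟩ => ⟨⟨hp, ?_⟩, h0⟩⟩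
  intro s t _ ⟨hsu, _⟩
  exact Fin.not_lt_zero _ (h0 ▸ hsu)

theorem sum_filter_apply_eq_zero {n : ℕ} [NeZero n] {M : Type*} [AddCommMonoid M]
    (S : Finset (Equiv.Perm (Fin n))) (f : Equiv.Perm (Fin n) → M) :
    ∑ u, ∑ π ∈ S.filter (fun π => π u = 0), f π = ∑ π ∈ S, f π := by
  rw [← sum_fiberwise S (fun π => π.symm 0) f]
  refine sum_congr rfl fun u _ => sum_congr (filter_congr fun π _ => ?_) fun _ _ => rfl
  rw [Equiv.symm_apply_eq, eq_comm]

section RotationInvariant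

variable {n : ℕ} [NeZero n] {S : Finset (Equiv.Perm (Fin n))}

theorem card_filter_apply_eq_zero_eq
    (hS : ∀ π ∈ S, ∀ r, π.trans (Equiv.addRight r) ∈ S) (u v : Fin n) :
    #(S.filter (fun π => π u = 0)) = #(S.filter (fun π => π v = 0)) := by
  have shift_mem : ∀ w w' : Fin n, ∀ π ∈ S.filter (fun π => π w = 0),
      π.trans (Equiv.addRight (-π w')) ∈ S.filter (fun π => π w' = 0) := by
    intro w w' π hπ
    rw [mem_filter] at hπ ⊢
    exact ⟨hS π hπ.1 _, by simp⟩
  have shift_shift : ∀ w w' : Fin n, ∀ π ∈ S.filter (fun π => π w = 0),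
      (π.trans (Equiv.addRight (-π w'))).trans
        (Equiv.addRight (-(π.trans (Equiv.addRight (-π w'))) w)) = π := by
    intro w w' π hπ
    ext x
    simp [(mem_filter.1 hπ).2]
  exact card_bij' (fun π _ => π.trans (Equiv.addRight (-π v)))
    (fun σ _ => σ.trans (Equiv.addRight (-σ u)))
    (shift_mem u v) (shift_mem v u) (shift_shift u v) (shift_shift v u)

theorem card_eq_mul_card_filter_apply_eq_zero
    (hS : ∀ π ∈ S, ∀ r, π.trans (Equiv.addRight r) ∈ S) (v : Fin n) :
    #S = n * #(S.filter (fun π => π v = 0)) := by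
  calc #S = ∑ u, #(S.filter (fun π => π u = 0)) := by
        simpa only [card_eq_sum_ones] using (sum_filter_apply_eq_zero S fun _ => 1).symm
    _ = ∑ _u : Fin n, #(S.filter (fun π => π v = 0)) :=
        sum_congr rfl fun u _ => card_filter_apply_eq_zero_eq hS u v
    _ = n * #(S.filter (fun π => π v = 0)) := by simp

theorem sum_div_card_eq_average_filter_apply_eq_zero {K : Type*} [Semifield K]
    (hS : ∀ π ∈ S, ∀ r, π.trans (Equiv.addRight r) ∈ S) (f : Equiv.Perm (Fin n) → K) :
    (∑ π ∈ S, f π) / #S = (1 / n) * ∑ u, (∑ π ∈ S.filter (fun π => π u = 0), f π) /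
      #(S.filter (fun π => π u = 0)) := by
  set c := #(S.filter (fun π => π 0 = 0))
  have hfiber : ∀ u, #(S.filter (fun π => π u = 0)) = c := fun u =>
    card_filter_apply_eq_zero_eq hS u 0
  simp_rw [hfiber, ← sum_div, sum_filter_apply_eq_zero,
    card_eq_mul_card_filter_apply_eq_zero hS 0]
  rw [Nat.cast_mul, one_div_mul_eq_div, div_div, mul_comm]

end RotationInvariant

theorem expected_D_planar_eq_avg_fixed_general (n : ℕ) (G : SimpleGraph (Fin n)) :
    (∑ π ∈ planarSet G, ((Dsum G π : ℤ) : ℚ)) / ((planarSet G).card : ℚ)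
      = (1 / (n : ℚ)) * ∑ u : Fin n,
          (∑ π ∈ projSet1 G u, ((Dsum G π : ℤ) : ℚ)) / ((projSet1 G u).card : ℚ) := by
  rcases n.eq_zero_or_pos with rfl | hn
  · simp [Dsum, Finset.eq_empty_of_isEmpty G.edgeFinset]
  have : NeZero n := ⟨hn.ne'⟩
  simp_rw [projSet1_eq_filter_planarSet]
  refine sum_div_card_eq_average_filter_apply_eq_zero (fun π hπ r => ?_) _
  simp only [planarSet, mem_filter, mem_univ, true_and] at hπ ⊢
  exact hπ.trans_addRight r

/-- `E_pl[D] = (1/n) Σ_u E¹_pr[D | T^u]`. -/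
theorem expected_D_planar_eq_avg_fixed (n : ℕ) (G : SimpleGraph (Fin n)) (hT : G.IsTree) :
    (∑ π ∈ planarSet G, ((Dsum G π : ℤ) : ℚ)) / ((planarSet G).card : ℚ)
      = (1 / (n : ℚ)) * ∑ u : Fin n,
          (∑ π ∈ projSet1 G u, ((Dsum G π : ℤ) : ℚ)) / ((projSet1 G u).card : ℚ) :=
  expected_D_planar_eq_avg_fixed_general n G
end

section
/- For a free tree T rooted at r ∈ {u,v} with uv an edge incident to the root, the expected length of uv in a uniformly random projective arrangement conditioned on π(r)=1 equals n/2. -/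
/-!
Negation on `Fin n` fixes position `0` and sends every other position `k` to `n - k`: it is a
reflection of the circle of positions, so it preserves planarity, and it maps the planar
arrangements with the root first to themselves. Pairing each such arrangement with its reflection,
the positions of `w` in a pair add up to `n`, so the average length of the root edge is `n / 2`.
For a tree there is such an arrangement: list the vertices in depth-first preorder, i.e. sort
them by the lexicographic order of their paths from the root.
-/

open Finset

attribute [local instance] Classical.propDecidable

theorem List.append_lt_of_lt_of_not_prefix {α : Type*} [LT α] {l₁ l₂ : List α} (l₃ : List α)
    (h : l₁ < l₂) (hp : ¬ l₁ <+: l₂) : l₁ ++ l₃ < l₂ := by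
  induction h with
  | nil => exact absurd List.nil_prefix hp
  | cons _ ih => exact List.Lex.cons (ih (by simpa [List.prefix_cons_inj] using hp))
  | rel h => exact List.Lex.rel h

-- Read with `P, P ++ [a]` and `Q, Q ++ [b]` the root paths of the ends of two edges: in the
-- lexicographic order of root paths, two edges never cross.
theorem List.not_concat_lt_concat_of_lt_of_lt_concat {α : Type*} [LinearOrder α]
    {P Q : List α} {a : α} (b : α) (h₁ : P < Q) (h₂ : Q < P ++ [a]) : ¬ P ++ [a] < Q ++ [b] := by
  have hQ : ¬ Q <+: P ++ [a] := by
    rw [List.prefix_concat_iff]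
    rintro (rfl | hQP)
    · exact lt_irrefl _ h₂
    · exact hQP.le h₁
  exact lt_asymm (List.append_lt_of_lt_of_not_prefix [b] h₂ hQ)

theorem exists_perm_lt_iff_of_injective {α : Type*} [LinearOrder α] {n : ℕ} {f : Fin n → α}
    (hf : Function.Injective f) : ∃ π : Equiv.Perm (Fin n), ∀ a b, π a < π b ↔ f a < f b := by
  classical
  let o := Fintype.orderIsoFinOfCardEq (Set.range f)
    (by rw [Set.card_range_of_injective hf, Fintype.card_fin])
  refine ⟨(Equiv.ofInjective f hf).trans o.symm.toEquiv, fun a b => ?_⟩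
  simp only [Equiv.trans_apply, OrderIso.toEquiv_symm, Equiv.ofInjective_apply]
  exact o.symm.lt_iff_lt

theorem SimpleGraph.IsAcyclic.support_eq_concat_or_support_eq_concat {V : Type*}
    {G : SimpleGraph V} (hG : G.IsAcyclic) {u v w : V} {p : G.Walk u v} {q : G.Walk u w}
    (hp : p.IsPath) (hq : q.IsPath) (hadj : G.Adj v w) :
    q.support = p.support ++ [w] ∨ p.support = q.support ++ [v] := by
  by_cases hv : v ∈ q.support
  · left
    rw [hG.path_concat hp hq hadj hv, SimpleGraph.Walk.support_concat]
  · right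
    have hw := hG.mem_support_of_ne_mem_support_of_adj_of_isPath hp hq hadj hv
    rw [hG.path_concat hq hp hadj.symm hw, SimpleGraph.Walk.support_concat]

theorem Fin.neg_lt_neg_iff_of_ne_zero {n : ℕ} [NeZero n] {a b : Fin n} (ha : a ≠ 0) (hb : b ≠ 0) :
    -a < -b ↔ b < a := by
  have := Fin.val_ne_zero_iff.2 ha
  have := Fin.val_ne_zero_iff.2 hb
  simp only [Fin.lt_def, Fin.val_neg, ha, hb, if_false]
  omega

section

variable {n : ℕ} {G : SimpleGraph (Fin n)}

theorem IsPlanarArr.trans_neg [NeZero n] {π : Equiv.Perm (Fin n)} (hπ : IsPlanarArr G π) :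
    IsPlanarArr G (π.trans (Equiv.neg (Fin n))) := by
  rintro s t u v hst huv ⟨hsu, hut, htv⟩
  simp only [Equiv.trans_apply, Equiv.neg_apply] at hsu hut htv
  have ne_zero_of_gt {a b : Fin n} (h : -a < -b) : b ≠ 0 := by
    rintro rfl
    simp at h
  have hu := ne_zero_of_gt hsu
  have ht := ne_zero_of_gt hut
  have hv := ne_zero_of_gt htv
  rw [Fin.neg_lt_neg_iff_of_ne_zero hu ht] at hut
  rw [Fin.neg_lt_neg_iff_of_ne_zero ht hv] at htv
  by_cases hs : π s = 0
  · exact hπ s t v u hst huv.symm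
      ⟨hs ▸ Fin.pos_iff_ne_zero.2 hv, htv, hut⟩
  · rw [Fin.neg_lt_neg_iff_of_ne_zero hs hu] at hsu
    exact hπ v u t s huv.symm hst.symm ⟨htv, hut, hsu⟩

theorem mem_projSet1 [NeZero n] {r : Fin n} {π : Equiv.Perm (Fin n)} :
    π ∈ projSet1 G r ↔ IsPlanarArr G π ∧ π r = 0 := by
  simp only [projSet1, IsProjectiveArr, mem_filter, mem_univ, true_and, Fin.val_eq_zero_iff]
  refine ⟨fun ⟨⟨hπ, _⟩, hr⟩ => ⟨hπ, hr⟩, fun ⟨hπ, hr⟩ => ⟨⟨hπ, ?_⟩, hr⟩⟩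
  rintro s t - ⟨hsr, -⟩
  exact Fin.not_lt_zero _ (hr ▸ hsr)

theorem trans_neg_mem_projSet1 [NeZero n] {r : Fin n} {π : Equiv.Perm (Fin n)}
    (hπ : π ∈ projSet1 G r) : π.trans (Equiv.neg (Fin n)) ∈ projSet1 G r := by
  obtain ⟨hplanar, hr⟩ := mem_projSet1.1 hπ
  exact mem_projSet1.2 ⟨hplanar.trans_neg, by simp [hr]⟩

theorem two_mul_sum_apply_projSet1 [NeZero n] {r w : Fin n} (hw : w ≠ r) :
    2 * ∑ π ∈ projSet1 G r, (π w : ℕ) = #(projSet1 G r) * n := by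
  let reflect : Equiv.Perm (Fin n) → Equiv.Perm (Fin n) := fun π => π.trans (Equiv.neg (Fin n))
  have reflect_reflect (π : Equiv.Perm (Fin n)) : reflect (reflect π) = π :=
    Equiv.ext fun x => neg_neg (π x)
  have sum_reflect : ∑ π ∈ projSet1 G r, (π w : ℕ) = ∑ π ∈ projSet1 G r, (reflect π w : ℕ) :=
    sum_nbij' reflect reflect (fun _ => trans_neg_mem_projSet1) (fun _ => trans_neg_mem_projSet1)
      (fun π _ => reflect_reflect π) (fun π _ => reflect_reflect π)
      (fun π _ => by rw [reflect_reflect])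
  have add_reflect : ∀ π ∈ projSet1 G r, (π w : ℕ) + (reflect π w : ℕ) = n := by
    intro π hπ
    have hπw : π w ≠ 0 := fun h => hw (π.injective (h.trans (mem_projSet1.1 hπ).2.symm))
    have := (π w).is_lt
    simp only [reflect, Equiv.trans_apply, Equiv.neg_apply, Fin.val_neg, hπw, if_false]
    omega
  rw [two_mul]
  nth_rw 2 [sum_reflect]
  rw [← sum_add_distrib, sum_congr rfl add_reflect, sum_const, smul_eq_mul]

theorem SimpleGraph.IsTree.exists_isPlanarArr_apply_eq_zero [NeZero n] (hT : G.IsTree)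
    (r : Fin n) : ∃ π : Equiv.Perm (Fin n), IsPlanarArr G π ∧ π r = 0 := by
  choose path hpath using fun v => (hT.existsUnique_path r v).exists
  let key : Fin n → List (Fin n) := fun v => (path v).support
  have key_injective : Function.Injective key := fun a b h => by
    have := congrArg List.getLast? h
    rwa [List.getLast?_eq_some_getLast (by simp [key]),
      List.getLast?_eq_some_getLast (by simp [key]),
      SimpleGraph.Walk.getLast_support, SimpleGraph.Walk.getLast_support, Option.some_inj] at this
  have not_key_lt_key_root (v : Fin n) : ¬ key v < key r := by
    have : path r = .nil := congrArg Subtype.val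
      ((hT.isAcyclic.subsingleton_path r r).elim ⟨path r, hpath r⟩ SimpleGraph.Path.nil)
    simp only [key, this, SimpleGraph.Walk.support_nil]
    rw [← (path v).cons_tail_support]
    exact List.IsPrefix.le ⟨_, rfl⟩
  have key_adj {s t : Fin n} (hst : G.Adj s t) (hlt : key s < key t) : key t = key s ++ [t] :=
    (hT.isAcyclic.support_eq_concat_or_support_eq_concat (hpath s) (hpath t) hst).resolve_right
      fun h => List.le_append_left (l₂ := [s]) (by rw [← h]; exact hlt)
  obtain ⟨π, hπ⟩ := exists_perm_lt_iff_of_injective key_injective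
  refine ⟨π, ?_, ?_⟩
  · rintro s t u v hst huv ⟨hsu, hut, htv⟩
    rw [hπ] at hsu hut htv
    have ht := key_adj hst (hsu.trans hut)
    have hv := key_adj huv (hut.trans htv)
    rw [ht] at hut htv
    rw [hv] at htv
    exact List.not_concat_lt_concat_of_lt_of_lt_concat v hsu hut htv
  · obtain ⟨v, hv⟩ := π.surjective 0
    refine le_antisymm ?_ (Fin.zero_le _)
    rw [← hv, ← not_lt, hπ]
    exact not_key_lt_key_root v

theorem projSet1_nonempty [NeZero n] (hT : G.IsTree) (r : Fin n) :
    (projSet1 G r).Nonempty := by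
  obtain ⟨π, hπ⟩ := hT.exists_isPlanarArr_apply_eq_zero r
  exact ⟨π, mem_projSet1.2 hπ⟩

end

/-- For an edge incident to the root `r`, the expected edge length in a uniformly random
projective arrangement conditioned on `π(r) = 1` equals `n/2`. -/
theorem expected_root_edge_length_fixed (n : ℕ) (G : SimpleGraph (Fin n)) (hT : G.IsTree)
    (r w : Fin n) (hrw : G.Adj r w) :
    (∑ π ∈ projSet1 G r, ((|((π r : ℕ) : ℤ) - ((π w : ℕ) : ℤ)| : ℤ) : ℚ))
        / ((projSet1 G r).card : ℚ)
      = (n : ℚ) / 2 := by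
  have : NeZero n := ⟨r.pos.ne'⟩
  have length_eq : ∀ π ∈ projSet1 G r,
      ((|((π r : ℕ) : ℤ) - ((π w : ℕ) : ℤ)| : ℤ) : ℚ) = ((π w : ℕ) : ℚ) := by
    intro π hπ
    simp [(mem_projSet1.1 hπ).2]
  have card_ne_zero : (#(projSet1 G r) : ℚ) ≠ 0 := by
    exact_mod_cast (projSet1_nonempty hT r).card_pos.ne'
  have two_mul_sum : 2 * ∑ π ∈ projSet1 G r, ((π w : ℕ) : ℚ) = #(projSet1 G r) * n := by
    exact_mod_cast two_mul_sum_apply_projSet1 hrw.ne'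
  rw [sum_congr rfl length_eq, div_eq_iff card_ne_zero]
  linarith
end
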